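/- arXiv:2102.09967 — 5 statements merged into one kernel-verified Lean document; each statement's English description precedes it below -/
import Mathlib

section
/- Let H be an inner product space and v_1, ..., v_N elements of H of norm at most 1. Then ‖(1/N) ∑_{n=1}^N v_n‖² ≤ (2/N) ∑_{m=1}^N Re((1/N) ∑_{n=1}^{N-m} ⟨v_{n+m}, v_n⟩) + 1/N. -/
/-!
Expanding `‖∑ v n‖²` as `∑ i, ∑ j, Re ⟪v i, v j⟫` and grouping the off-diagonal pairs `j < i` by
their lag `m = i - j` gives exactly `∑ ‖v n‖² + 2 ∑ m, ∑ n, Re ⟪v (n + m), v n⟫`; the diagonal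
contributes at most `N`.
-/

open Finset RCLike

theorem Finset.sum_sum_eq_sum_diag_add_sum_sum_lt {ι M : Type*} [LinearOrder ι] [AddCommMonoid M]
    (s : Finset ι) (g : ι → ι → M) :
    ∑ i ∈ s, ∑ j ∈ s, g i j = ∑ i ∈ s, g i i + ∑ i ∈ s, ∑ j ∈ s with j < i, (g i j + g j i) := by
  have hrow : ∀ i ∈ s, ∑ j ∈ s, g i j =
      g i i + ∑ j ∈ s with i < j, g i j + ∑ j ∈ s with j < i, g i j := by
    intro i hi
    have hnot_lt : {j ∈ s | ¬j < i} = insert i {j ∈ s | i < j} := by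
      ext j
      simp only [mem_filter, mem_insert, not_lt]
      constructor
      · rintro ⟨hj, hij⟩
        rcases hij.eq_or_lt with rfl | hlt
        exacts [Or.inl rfl, Or.inr ⟨hj, hlt⟩]
      · rintro (rfl | ⟨hj, hlt⟩)
        exacts [⟨hi, le_rfl⟩, ⟨hj, hlt.le⟩]
    rw [← sum_filter_not_add_sum_filter s (· < i), hnot_lt, sum_insert (by simp)]
  have hswap : ∑ i ∈ s, ∑ j ∈ s with i < j, g i j = ∑ i ∈ s, ∑ j ∈ s with j < i, g j i :=
    sum_comm' fun i j => by simp only [mem_filter]; tauto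
  rw [sum_congr rfl hrow, sum_add_distrib, sum_add_distrib, hswap, add_assoc,
    ← sum_add_distrib]
  simp only [sum_add_distrib, add_comm]

theorem norm_sum_sq_eq_sum_norm_sq_add_two_mul_sum_sum_lt {𝕜 E ι : Type*} [RCLike 𝕜]
    [NormedAddCommGroup E] [InnerProductSpace 𝕜 E] [LinearOrder ι] (s : Finset ι) (f : ι → E) :
    ‖∑ i ∈ s, f i‖ ^ 2 =
      ∑ i ∈ s, ‖f i‖ ^ 2 + 2 * ∑ i ∈ s, ∑ j ∈ s with j < i, re (inner 𝕜 (f i) (f j)) := by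
  simp only [norm_sq_eq_re_inner (𝕜 := 𝕜), sum_inner, inner_sum, map_sum]
  rw [sum_sum_eq_sum_diag_add_sum_sum_lt, mul_sum]
  simp_rw [mul_sum, inner_re_symm (𝕜 := 𝕜) (f _) (f _), two_mul]

theorem Finset.sum_Icc_sum_filter_lt_eq_sum_Icc_sum_Icc_sub {M : Type*} [AddCommMonoid M]
    (N : ℕ) (h : ℕ → ℕ → M) :
    ∑ i ∈ Icc 1 N, ∑ j ∈ Icc 1 N with j < i, h i j =
      ∑ m ∈ Icc 1 N, ∑ n ∈ Icc 1 (N - m), h (n + m) n := by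
  rw [sum_sigma', sum_sigma']
  refine sum_nbij' (fun p => ⟨p.1 - p.2, p.2⟩) (fun q => ⟨q.2 + q.1, q.2⟩) ?_ ?_ ?_ ?_ ?_
  all_goals
    rintro ⟨i, j⟩ hij
    simp only [mem_sigma, mem_filter, mem_Icc] at hij ⊢
  · omega
  · omega
  · exact Sigma.ext (by dsimp only; omega) HEq.rfl
  · exact Sigma.ext (by dsimp only; omega) HEq.rfl
  · congr; omega

theorem stmt0_general {H : Type*} [NormedAddCommGroup H] [InnerProductSpace ℂ H]
    (N : ℕ) (v : ℕ → H) (hv : ∀ n ∈ Finset.Icc 1 N, ‖v n‖ ≤ 1) :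
    ‖(N : ℝ)⁻¹ • ∑ n ∈ Finset.Icc 1 N, v n‖ ^ 2 ≤
      2 / (N : ℝ) * ∑ m ∈ Finset.Icc 1 N,
        ((N : ℝ)⁻¹ * ∑ n ∈ Finset.Icc 1 (N - m), (inner ℂ (v (n + m)) (v n) : ℂ).re)
      + 1 / (N : ℝ) := by
  have hdiag : ∑ n ∈ Icc 1 N, ‖v n‖ ^ 2 ≤ N := by
    simpa using sum_le_card_nsmul _ _ 1 fun n hn => pow_le_one₀ (norm_nonneg _) (hv n hn)
  rw [norm_smul, mul_pow, norm_inv, RCLike.norm_natCast,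
    norm_sum_sq_eq_sum_norm_sq_add_two_mul_sum_sum_lt (𝕜 := ℂ),
    sum_Icc_sum_filter_lt_eq_sum_Icc_sum_Icc_sub, ← mul_sum]
  have hinv : ((N : ℝ)⁻¹) ^ 2 * N = 1 / N := by
    rcases N.eq_zero_or_pos with rfl | hpos
    · simp
    · field_simp
  simp only [RCLike.re_to_complex]
  linear_combination mul_le_mul_of_nonneg_left hdiag (sq_nonneg (N : ℝ)⁻¹) + hinv

/-- **Van der Corput-type averaging inequality.** If `v 1, ..., v N` are vectors of norm
at most 1 in an inner product space, then
`‖(1/N) ∑ v n‖² ≤ (2/N) ∑_{m=1}^N Re((1/N) ∑_{n=1}^{N-m} ⟨v (n+m), v n⟩) + 1/N`. -/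
theorem stmt0 {H : Type*} [NormedAddCommGroup H] [InnerProductSpace ℂ H]
    (N : ℕ) (hN : 0 < N) (v : ℕ → H) (hv : ∀ n ∈ Finset.Icc 1 N, ‖v n‖ ≤ 1) :
    ‖(N : ℝ)⁻¹ • ∑ n ∈ Finset.Icc 1 N, v n‖ ^ 2 ≤
      2 / (N : ℝ) * ∑ m ∈ Finset.Icc 1 N,
        ((N : ℝ)⁻¹ * ∑ n ∈ Finset.Icc 1 (N - m), (inner ℂ (v (n + m)) (v n) : ℂ).re)
      + 1 / (N : ℝ) :=
  stmt0_general N v hv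
end

section
/- Let a_1, ..., a_ℓ : [c, ∞) → ℝ be functions such that for all real t_1, ..., t_ℓ not all zero, lim_{N→∞} (1/N) ∑_{n=1}^N e(a_1(n)t_1 + ... + a_ℓ(n)t_ℓ) = 0. Then the integer part sequences [a_1(n)], ..., [a_ℓ(n)] satisfy: for all t_1, ..., t_ℓ ∈ [0,1) not all zero, lim_{N→∞} (1/N) ∑_{n=1}^N e([a_1(n)]t_1 + ... + [a_ℓ(n)]t_ℓ) = 0. -/
/-!
Write `⌊y⌋ = y - {y}`, so that `e(∑ ⌊a_j(n)⌋ t_j) = e(∑ a_j(n) t_j) ∏_j e(-t_j {a_j(n)})`.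
The function `y ↦ e(-t {y})` is continuous except at the integers, hence it is sandwiched by
trigonometric polynomials: `|e(-t {y}) - Q(y)| ≤ R(y)` with `R` a small constant plus a multiple
of a Fejér kernel, which dominates the indicator of a small neighbourhood of `ℤ`, so that the
constant term of `R` is small. Replacing each factor by such a `Q_j` turns the average into a
combination of averages of `e(∑ a_j(n) (t_j + m_j))`, `m ∈ ℤ^ℓ`, all of which tend to `0`
because some `t_{j₀}` is not an integer. The error is bounded by the averages of `R(a_j(n))`,
which tend to the constant term of `R` because each `a_j(n)` alone is equidistributed mod 1.
-/

open Filter Finset Topology Real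
open scoped FourierTransform ComplexConjugate

lemma norm_prod_sub_prod_le {ι R : Type*} [NormedCommRing R] [NormOneClass R] (s : Finset ι)
    {f g : ι → R} {B : ℝ} (hB : 1 ≤ B) (hf : ∀ i ∈ s, ‖f i‖ ≤ B) (hg : ∀ i ∈ s, ‖g i‖ ≤ B) :
    ‖∏ i ∈ s, f i - ∏ i ∈ s, g i‖ ≤ B ^ #s * ∑ i ∈ s, ‖f i - g i‖ := by
  classical
  induction s using Finset.induction with
  | empty => simp
  | insert i s hi ih =>
    simp only [forall_mem_insert] at hf hg
    have hprod : ‖∏ j ∈ s, f j‖ ≤ B ^ #s := (Finset.norm_prod_le _ _).trans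
      (by simpa using prod_le_prod (fun j _ => norm_nonneg _) hf.2)
    have hsplit : ∏ j ∈ insert i s, f j - ∏ j ∈ insert i s, g j
        = (f i - g i) * ∏ j ∈ s, f j + g i * (∏ j ∈ s, f j - ∏ j ∈ s, g j) := by
      rw [prod_insert hi, prod_insert hi]; ring
    have hpow : B ^ #s ≤ B ^ (#s + 1) := pow_le_pow_right₀ hB (Nat.le_succ _)
    have hsum := sum_nonneg fun j (_ : j ∈ s) => norm_nonneg (f j - g j)
    rw [hsplit, card_insert_of_notMem hi, sum_insert hi, mul_add]
    calc _ ≤ ‖f i - g i‖ * ‖∏ j ∈ s, f j‖ + ‖g i‖ * ‖∏ j ∈ s, f j - ∏ j ∈ s, g j‖ :=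
          (norm_add_le _ _).trans (add_le_add (norm_mul_le _ _) (norm_mul_le _ _))
      _ ≤ ‖f i - g i‖ * B ^ #s + B * (B ^ #s * ∑ j ∈ s, ‖f j - g j‖) := by
          gcongr
          · exact hg.1
          · exact ih hf.2 hg.2
      _ ≤ _ := by
          rw [← mul_assoc, ← pow_succ', mul_comm]
          gcongr

noncomputable def e : AddChar ℝ ℂ := Circle.coeHom.compAddChar 𝐞

lemma e_apply (x : ℝ) : e x = Complex.exp (2 * π * Complex.I * x) := by
  change Complex.exp _ = _
  push_cast
  ring_nf

lemma norm_e (x : ℝ) : ‖e x‖ = 1 := Circle.norm_coe _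

lemma e_intCast (m : ℤ) : e m = 1 := by
  change ((Circle.exp (2 * π * m) : Circle) : ℂ) = 1
  rw [Circle.exp_two_pi_mul_int, Circle.coe_one]

lemma conj_e (x : ℝ) : conj (e x) = e (-x) := Circle.starRingEnd_addChar (e := 𝐞) x

lemma re_e (x : ℝ) : (e x).re = Real.cos (2 * π * x) := Complex.exp_ofReal_mul_I_re _

lemma e_sum {ι : Type*} (s : Finset ι) (f : ι → ℝ) : e (∑ i ∈ s, f i) = ∏ i ∈ s, e (f i) := by
  classical
  induction s using Finset.induction with
  | empty => simp
  | insert i s hi ih => rw [sum_insert hi, prod_insert hi, AddChar.map_add_eq_mul, ih]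

lemma continuous_e : Continuous e := continuous_subtype_val.comp Real.continuous_fourierChar

lemma fourier_coe_eq_e (m : ℤ) (x : ℝ) : fourier m (x : AddCircle (1 : ℝ)) = e (m * x) := by
  rw [fourier_coe_apply, e_apply]
  push_cast
  ring_nf

lemma e_sum_floor_mul {ι : Type*} (s : Finset ι) (y t : ι → ℝ) :
    e (∑ j ∈ s, ⌊y j⌋ * t j) =
      e (∑ j ∈ s, y j * t j) * ∏ j ∈ s, e (-(t j * Int.fract (y j))) := by
  rw [← e_sum, ← AddChar.map_add_eq_mul, ← sum_add_distrib]
  congr 1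
  refine sum_congr rfl fun j _ => ?_
  rw [Int.fract]
  ring

section CesaroMean

variable {𝕜 : Type*} [RCLike 𝕜]

noncomputable def cesaroMean (u : ℕ → 𝕜) (N : ℕ) : 𝕜 := (N : 𝕜)⁻¹ * ∑ n ∈ Icc 1 N, u n

lemma cesaroMean_sum {ι : Type*} (s : Finset ι) (f : ι → ℕ → 𝕜) (N : ℕ) :
    cesaroMean (fun n => ∑ i ∈ s, f i n) N = ∑ i ∈ s, cesaroMean (f i) N := by
  simp only [cesaroMean, mul_sum]
  exact sum_comm

lemma cesaroMean_const_mul (c : 𝕜) (u : ℕ → 𝕜) (N : ℕ) :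
    cesaroMean (fun n => c * u n) N = c * cesaroMean u N := by
  simp only [cesaroMean, ← mul_sum]
  ring

lemma cesaroMean_sub (u v : ℕ → 𝕜) (N : ℕ) :
    cesaroMean (fun n => u n - v n) N = cesaroMean u N - cesaroMean v N := by
  simp only [cesaroMean, sum_sub_distrib, mul_sub]

lemma cesaroMean_const (c : 𝕜) {N : ℕ} (hN : N ≠ 0) : cesaroMean (fun _ => c) N = c := by
  simp [cesaroMean, hN]

lemma tendsto_cesaroMean_const (c : 𝕜) : Tendsto (cesaroMean fun _ => c) atTop (𝓝 c) :=
  tendsto_const_nhds.congr' <|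
    (eventually_ne_atTop 0).mono fun _ hN => (cesaroMean_const c hN).symm

lemma Filter.Tendsto.cesaroMean_sum {ι : Type*} (s : Finset ι) {f : ι → ℕ → 𝕜} {L : ι → 𝕜}
    (h : ∀ i ∈ s, Tendsto (cesaroMean (f i)) atTop (𝓝 (L i))) :
    Tendsto (cesaroMean fun n => ∑ i ∈ s, f i n) atTop (𝓝 (∑ i ∈ s, L i)) :=
  (tendsto_finsetSum s h).congr fun N => (_root_.cesaroMean_sum s f N).symm

lemma Filter.Tendsto.cesaroMean_const_mul (c : 𝕜) {u : ℕ → 𝕜} {L : 𝕜}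
    (h : Tendsto (cesaroMean u) atTop (𝓝 L)) :
    Tendsto (cesaroMean fun n => c * u n) atTop (𝓝 (c * L)) :=
  (h.const_mul c).congr fun N => (_root_.cesaroMean_const_mul c u N).symm

lemma norm_cesaroMean_le (u : ℕ → 𝕜) (N : ℕ) :
    ‖cesaroMean u N‖ ≤ cesaroMean (fun n => ‖u n‖) N := by
  rw [cesaroMean, cesaroMean, norm_mul, norm_inv, RCLike.norm_natCast]
  gcongr
  exact norm_sum_le _ _

end CesaroMean

lemma cesaroMean_mono {u v : ℕ → ℝ} (h : ∀ n, u n ≤ v n) (N : ℕ) :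
    cesaroMean u N ≤ cesaroMean v N := by
  unfold cesaroMean
  gcongr with n
  exact h n

lemma re_cesaroMean (u : ℕ → ℂ) (N : ℕ) :
    (cesaroMean u N).re = cesaroMean (fun n => (u n).re) N := by
  simp [cesaroMean, Complex.re_sum]

theorem tendsto_cesaroMean_zero_of_approx {u : ℕ → ℂ}
    (h : ∀ ε > 0, ∃ (v w : ℕ → ℂ) (L : ℂ), Tendsto (cesaroMean v) atTop (𝓝 0) ∧
      (∀ n, ‖u n - v n‖ ≤ (w n).re) ∧ Tendsto (cesaroMean w) atTop (𝓝 L) ∧ L.re ≤ ε) :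
    Tendsto (cesaroMean u) atTop (𝓝 0) := by
  rw [NormedAddGroup.tendsto_nhds_zero]
  intro ε hε
  obtain ⟨v, w, L, hv, huv, hw, hL⟩ := h (ε / 4) (by positivity)
  have hw_re : Tendsto (fun N => (cesaroMean w N).re) atTop (𝓝 L.re) :=
    (Complex.continuous_re.tendsto L).comp hw
  filter_upwards [NormedAddGroup.tendsto_nhds_zero.1 hv (ε / 2) (half_pos hε),
    hw_re.eventually_lt_const (by linarith : L.re < ε / 2)] with N hvN hwN
  have hdiff : ‖cesaroMean u N - cesaroMean v N‖ ≤ (cesaroMean w N).re := by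
    rw [← cesaroMean_sub, re_cesaroMean]
    exact (norm_cesaroMean_le _ N).trans (cesaroMean_mono huv N)
  calc ‖cesaroMean u N‖ ≤ ‖cesaroMean v N‖ + ‖cesaroMean u N - cesaroMean v N‖ :=
        norm_le_norm_add_norm_sub' _ _
    _ < ε := by linarith

noncomputable def trigPoly : (ℤ →₀ ℂ) →ₗ[ℂ] ℝ → ℂ :=
  Finsupp.linearCombination ℂ fun m x => e (m * x)

lemma trigPoly_apply (c : ℤ →₀ ℂ) (x : ℝ) :
    trigPoly c x = ∑ m ∈ c.support, c m * e (m * x) := by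
  simp [trigPoly, Finsupp.linearCombination_apply, Finsupp.sum]

lemma trigPoly_single (m : ℤ) (a : ℂ) (x : ℝ) :
    trigPoly (Finsupp.single m a) x = a * e (m * x) := by
  simp [trigPoly]

lemma trigPoly_add_intCast (c : ℤ →₀ ℂ) (x : ℝ) (k : ℤ) :
    trigPoly c (x + k) = trigPoly c x := by
  simp only [trigPoly_apply, mul_add, AddChar.map_add_eq_mul]
  refine sum_congr rfl fun m _ => ?_
  rw [← Int.cast_mul, e_intCast, mul_one]

lemma exists_trigPoly_norm_sub_le (g : C(AddCircle (1 : ℝ), ℂ)) {ε : ℝ} (hε : 0 < ε) :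
    ∃ q : ℤ →₀ ℂ, ∀ x : ℝ, ‖g x - trigPoly q x‖ ≤ ε := by
  have hg : g ∈ (Submodule.span ℂ (Set.range (fourier (T := 1)))).topologicalClosure := by
    rw [span_fourier_closure_eq_top]; trivial
  obtain ⟨Q, hQ, hgQ⟩ := Metric.mem_closure_iff.1 hg ε hε
  obtain ⟨q, rfl⟩ := Finsupp.mem_span_range_iff_exists_finsupp.1 hQ
  refine ⟨q, fun x => ?_⟩
  have hq : (q.sum fun m a => a • fourier m) (x : AddCircle (1 : ℝ)) = trigPoly q x := by
    simp only [Finsupp.sum, ContinuousMap.coe_sum, Finset.sum_apply, ContinuousMap.coe_smul,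
      Pi.smul_apply, smul_eq_mul, fourier_coe_eq_e, trigPoly_apply]
  rw [← hq, ← dist_eq_norm]
  exact (ContinuousMap.dist_apply_le_dist _).trans hgQ.le

noncomputable def fejer (M : ℕ) : ℤ →₀ ℂ :=
  ((4 : ℂ) / M ^ 2) • ∑ k ∈ range M, ∑ k' ∈ range M, Finsupp.single ((k : ℤ) - k') 1

lemma fejer_apply_zero (M : ℕ) : fejer M 0 = 4 / M := by
  simp only [fejer, Finsupp.smul_apply, Finsupp.finsetSum_apply, Finsupp.single_apply,
    sub_eq_zero, Nat.cast_inj, sum_ite_eq, mem_range]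
  rw [sum_ite_of_true fun k hk => mem_range.1 hk, sum_const, card_range, smul_eq_mul, nsmul_one]
  rcases eq_or_ne M 0 with rfl | hM
  · simp
  · field_simp

lemma trigPoly_fejer (M : ℕ) (x : ℝ) :
    trigPoly (fejer M) x = ((4 / M ^ 2 * ‖∑ k ∈ range M, e (k * x)‖ ^ 2 : ℝ) : ℂ) := by
  rw [Complex.ofReal_mul, Complex.ofReal_pow, ← Complex.mul_conj', map_sum, sum_mul_sum]
  simp only [fejer, map_smul, map_sum, Pi.smul_apply, Finset.sum_apply, trigPoly_single, conj_e,
    ← AddChar.map_add_eq_mul, one_mul, smul_eq_mul]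
  push_cast
  congr 1
  refine sum_congr rfl fun k _ => sum_congr rfl fun k' _ => ?_
  ring_nf

lemma re_trigPoly_fejer_nonneg (M : ℕ) (x : ℝ) : 0 ≤ (trigPoly (fejer M) x).re := by
  rw [trigPoly_fejer, Complex.ofReal_re]
  positivity

lemma one_le_re_trigPoly_fejer {M : ℕ} (hM : 0 < M) {x : ℝ}
    (hx : |x - round x| ≤ 1 / (8 * M)) : 1 ≤ (trigPoly (fejer M) x).re := by
  set y := x - round x
  have hxy : trigPoly (fejer M) x = trigPoly (fejer M) y := by
    rw [← trigPoly_add_intCast _ y (round x), sub_add_cancel]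
  have hM' : (0 : ℝ) < M := Nat.cast_pos.2 hM
  -- each term `e(k y)` with `k < M` lies within angle `π / 4` of `1`
  have hre : (M : ℝ) / 2 ≤ (∑ k ∈ range M, e (k * y)).re := by
    rw [Complex.re_sum]
    calc (M : ℝ) / 2 = ∑ k ∈ range M, (1 / 2 : ℝ) := by simp; ring
      _ ≤ _ := sum_le_sum fun k hk => ?_
    have hk : (k : ℝ) ≤ M := by exact_mod_cast (mem_range.1 hk).le
    have hangle : |2 * π * (k * y)| ≤ 1 := by
      rw [abs_mul, abs_of_pos two_pi_pos, abs_mul, Nat.abs_cast]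
      calc 2 * π * (k * |y|) ≤ 2 * 4 * (M * (1 / (8 * M))) := by gcongr; exact pi_le_four
        _ = 1 := by field_simp; ring
    rw [re_e]
    nlinarith [one_sub_sq_div_two_le_cos (x := 2 * π * (k * y)), sq_abs (2 * π * (k * y)),
      abs_nonneg (2 * π * (k * y))]
  have hnorm : (M : ℝ) / 2 ≤ ‖∑ k ∈ range M, e (k * y)‖ := hre.trans (Complex.re_le_norm _)
  rw [hxy, trigPoly_fejer, Complex.ofReal_re]
  calc (1 : ℝ) = 4 / M ^ 2 * (M / 2) ^ 2 := by field_simp; ring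
    _ ≤ _ := by gcongr

theorem exists_trigPoly_sandwich {f : ℝ → ℂ} (hf : ∀ x, ‖f x‖ ≤ 1)
    (hg : ∀ δ : ℝ, 0 < δ → δ ≤ 1 / 2 → ∃ g : C(AddCircle (1 : ℝ), ℂ),
      (∀ z, ‖g z‖ ≤ 1) ∧ ∀ x : ℝ, δ ≤ |x - round x| → g x = f x)
    {ε : ℝ} (hε : 0 < ε) :
    ∃ q r : ℤ →₀ ℂ, (∀ x, ‖trigPoly q x‖ ≤ 2) ∧
      (∀ x, ‖f x - trigPoly q x‖ ≤ (trigPoly r x).re) ∧ (r 0).re ≤ ε := by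
  obtain ⟨M, hM⟩ := exists_nat_gt (24 / ε)
  have hM₀ : (0 : ℝ) < M := (by positivity : (0 : ℝ) < 24 / ε).trans hM
  have hM₁ : (1 : ℝ) ≤ M := Nat.one_le_cast.2 (Nat.cast_pos.1 hM₀)
  set η := min 1 (ε / 2)
  have hη : 0 < η := by positivity
  obtain ⟨g, hg₁, hgf⟩ := hg (1 / (8 * M)) (by positivity) (by
    rw [div_le_div_iff₀ (by positivity) two_pos]; linarith)
  obtain ⟨q, hq⟩ := exists_trigPoly_norm_sub_le g hη
  have hq₂ : ∀ x : ℝ, ‖trigPoly q x‖ ≤ 2 := fun x => by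
    linarith [norm_le_norm_add_norm_sub' (trigPoly q x) (g x), norm_sub_rev (trigPoly q x) (g x),
      hg₁ x, hq x, min_le_left 1 (ε / 2)]
  refine ⟨q, Finsupp.single 0 (η : ℂ) + (3 : ℂ) • fejer M, hq₂, fun x => ?_, ?_⟩
  · have hr : (trigPoly (Finsupp.single 0 (η : ℂ) + (3 : ℂ) • fejer M) x).re
        = η + 3 * (trigPoly (fejer M) x).re := by
      simp [trigPoly_single]
    rw [hr]
    have hP := re_trigPoly_fejer_nonneg M x
    by_cases hx : 1 / (8 * M) ≤ |x - round x|
    · rw [← hgf x hx]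
      linarith [hq x]
    · have hP₁ := one_le_re_trigPoly_fejer (Nat.cast_pos.1 hM₀) (not_le.1 hx).le
      linarith [norm_sub_le (f x) (trigPoly q x), hf x, hq₂ x]
  · have h12 : 12 / (M : ℝ) ≤ ε / 2 := by
      rw [div_le_iff₀ hM₀]; rw [div_lt_iff₀ hε] at hM; linarith
    simp only [Finsupp.add_apply, Finsupp.single_eq_same, Finsupp.smul_apply, fejer_apply_zero,
      smul_eq_mul, Complex.add_re, Complex.ofReal_re]
    rw [show 3 * (4 / (M : ℂ)) = ((12 / M : ℝ) : ℂ) by push_cast; ring, Complex.ofReal_re]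
    linarith [min_le_right 1 (ε / 2)]

/-- Equal to `x` on `[δ, 1 - δ]` and affine on `[0, δ]` and on `[1 - δ, 1]`, with the value `1 / 2`
at both `0` and `1`. -/
noncomputable def rampId (δ x : ℝ) : ℝ := x + (max 0 (δ - x) - max 0 (x - (1 - δ))) / (2 * δ)

lemma continuous_rampId (δ : ℝ) : Continuous (rampId δ) := by
  unfold rampId; fun_prop

lemma rampId_of_mem_Icc {δ x : ℝ} (hx : x ∈ Set.Icc δ (1 - δ)) : rampId δ x = x := by
  simp [rampId, max_eq_left (sub_nonpos.2 hx.1), max_eq_left (sub_nonpos.2 hx.2)]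

lemma rampId_zero_eq_rampId_one {δ : ℝ} (hδ : 0 < δ) (hδ' : δ ≤ 1 / 2) :
    rampId δ 0 = rampId δ 1 := by
  rw [rampId, rampId, max_eq_right (by linarith : (0 : ℝ) ≤ δ - 0),
    max_eq_left (by linarith : 0 - (1 - δ) ≤ 0), max_eq_left (by linarith : δ - 1 ≤ 0),
    max_eq_right (by linarith : (0 : ℝ) ≤ 1 - (1 - δ))]
  field_simp
  ring

theorem exists_continuous_eq_e_neg_mul_fract (s : ℝ) {δ : ℝ} (hδ : 0 < δ) (hδ' : δ ≤ 1 / 2) :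
    ∃ g : C(AddCircle (1 : ℝ), ℂ), (∀ z, ‖g z‖ ≤ 1) ∧
      ∀ x : ℝ, δ ≤ |x - round x| → g x = e (-(s * Int.fract x)) := by
  set f : ℝ → ℂ := fun y => e (-(s * rampId δ y))
  have hf : f 0 = f 1 := by simp only [f, rampId_zero_eq_rampId_one hδ hδ']
  have hfc : Continuous f :=
    continuous_e.comp ((continuous_const.mul (continuous_rampId δ)).neg)
  refine ⟨⟨AddCircle.liftIco 1 0 f, AddCircle.liftIco_zero_continuous hf hfc.continuousOn⟩,
    fun z => (norm_e _).le, fun x hx => ?_⟩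
  have hfract : Int.fract x ∈ Set.Icc δ (1 - δ) := by
    rw [abs_sub_round_eq_min, le_min_iff] at hx
    exact ⟨hx.1, by linarith⟩
  change AddCircle.liftIco 1 0 f x = _
  rw [← AddCircle.coe_fract,
    AddCircle.liftIco_zero_coe_apply ⟨Int.fract_nonneg x, Int.fract_lt_one x⟩]
  simp only [f, rampId_of_mem_Icc hfract]

section ExpAverages

variable {ι : Type*} [Fintype ι]

def ExpAveragesVanish (x : ℕ → ι → ℝ) : Prop :=
  ∀ ξ : ι → ℝ, ξ ≠ 0 → Tendsto (cesaroMean fun n => e (∑ j, x n j * ξ j)) atTop (𝓝 0)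

variable {x : ℕ → ι → ℝ}

theorem ExpAveragesVanish.tendsto_cesaroMean_sum (hx : ExpAveragesVanish x) {κ : Type*}
    (s : Finset κ) (w : κ → ℂ) (ξ : κ → ι → ℝ) :
    Tendsto (cesaroMean fun n => ∑ k ∈ s, w k * e (∑ j, x n j * ξ k j)) atTop
      (𝓝 (∑ k ∈ s with ξ k = 0, w k)) := by
  classical
  rw [sum_filter]
  refine Tendsto.cesaroMean_sum s fun k _ => ?_
  split_ifs with hξ
  · simpa [hξ] using tendsto_cesaroMean_const (w k)
  · simpa using (hx (ξ k) hξ).cesaroMean_const_mul (w k)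

theorem ExpAveragesVanish.tendsto_cesaroMean_trigPoly (hx : ExpAveragesVanish x) (j : ι)
    (c : ℤ →₀ ℂ) : Tendsto (cesaroMean fun n => trigPoly c (x n j)) atTop (𝓝 (c 0)) := by
  classical
  have key := hx.tendsto_cesaroMean_sum c.support c fun m => Pi.single j (m : ℝ)
  simp only [Pi.single_eq_zero_iff, Int.cast_eq_zero, Pi.single_apply, mul_ite, mul_zero,
    sum_ite_eq', mem_univ, if_true, filter_eq', Finsupp.mem_support_iff] at key
  convert key using 2
  · ext n; rw [trigPoly_apply]; simp only [mul_comm (x n j)]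
  · split_ifs with h <;> simp_all

theorem ExpAveragesVanish.tendsto_cesaroMean_e_mul_prod_trigPoly (hx : ExpAveragesVanish x)
    {t : ι → ℝ} {j₀ : ι} (ht : ∀ m : ℤ, t j₀ ≠ m) (q : ι → ℤ →₀ ℂ) :
    Tendsto (cesaroMean fun n => e (∑ j, x n j * t j) * ∏ j, trigPoly (q j) (x n j)) atTop
      (𝓝 0) := by
  classical
  have key := hx.tendsto_cesaroMean_sum (Fintype.piFinset fun j => (q j).support)
    (fun μ => ∏ j, q j (μ j)) fun μ j => t j + μ j
  have hfreq : ∀ μ : ι → ℤ, (fun j => t j + μ j) ≠ 0 := fun μ h0 => ht (-μ j₀) (by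
    have := congrFun h0 j₀
    push_cast
    simp only [Pi.zero_apply] at this
    linarith)
  simp only [hfreq, filter_false, sum_empty] at key
  refine key.congr fun N => ?_
  congr 1; ext n
  simp only [trigPoly_apply]
  rw [prod_univ_sum, mul_sum]
  refine sum_congr rfl fun μ _ => ?_
  simp only [mul_comm (x n _), add_mul, AddChar.map_add_eq_mul, e_sum, prod_mul_distrib]
  ring

theorem ExpAveragesVanish.tendsto_cesaroMean_e_sum_floor_mul (hx : ExpAveragesVanish x)
    {t : ι → ℝ} {j₀ : ι} (ht : ∀ m : ℤ, t j₀ ≠ m) :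
    Tendsto (cesaroMean fun n => e (∑ j, ⌊x n j⌋ * t j)) atTop (𝓝 0) := by
  refine tendsto_cesaroMean_zero_of_approx fun ε hε => ?_
  set K := Fintype.card ι with hK_def
  have hK : 0 < K := Fintype.card_pos_iff.2 ⟨j₀⟩
  choose q r hq hqr hr using fun j => exists_trigPoly_sandwich
    (f := fun y => e (-(t j * Int.fract y))) (fun y => (norm_e _).le)
    (fun δ hδ hδ' => exists_continuous_eq_e_neg_mul_fract (t j) hδ hδ')
    (by positivity : 0 < ε / (2 ^ K * K))
  refine ⟨fun n => e (∑ j, x n j * t j) * ∏ j, trigPoly (q j) (x n j),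
    fun n => ((2 ^ K : ℝ) : ℂ) * ∑ j, trigPoly (r j) (x n j), ((2 ^ K : ℝ) : ℂ) * ∑ j, r j 0,
    hx.tendsto_cesaroMean_e_mul_prod_trigPoly ht q, fun n => ?_,
    (Tendsto.cesaroMean_sum univ fun j _ =>
      hx.tendsto_cesaroMean_trigPoly j (r j)).cesaroMean_const_mul _, ?_⟩
  · rw [e_sum_floor_mul, ← mul_sub, norm_mul, norm_e, one_mul, Complex.re_ofReal_mul,
      Complex.re_sum]
    refine (norm_prod_sub_prod_le univ one_le_two (fun j _ => (norm_e _).le.trans one_le_two)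
      (fun j _ => hq j _)).trans ?_
    rw [card_univ]
    gcongr with j
    exact hqr j _
  · rw [Complex.re_ofReal_mul, Complex.re_sum]
    calc _ ≤ 2 ^ K * ∑ _j : ι, ε / (2 ^ K * K) := by gcongr with j; exact hr j
      _ = ε := by rw [sum_const, card_univ, ← hK_def, nsmul_eq_mul]; field_simp

end ExpAverages

theorem stmt14_general (ℓ : ℕ) (a : Fin ℓ → ℝ → ℝ)
    (h : ∀ t : Fin ℓ → ℝ, t ≠ 0 →
      Tendsto (fun N : ℕ => (N : ℂ)⁻¹ * ∑ n ∈ Finset.Icc 1 N,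
        Complex.exp (2 * ↑Real.pi * Complex.I * ↑(∑ j, a j (n : ℝ) * t j))) atTop (nhds 0)) :
    ∀ t : Fin ℓ → ℝ, (∀ j, t j ∈ Set.Ico (0 : ℝ) 1) → t ≠ 0 →
      Tendsto (fun N : ℕ => (N : ℂ)⁻¹ * ∑ n ∈ Finset.Icc 1 N,
        Complex.exp (2 * ↑Real.pi * Complex.I * ↑(∑ j, (⌊a j (n : ℝ)⌋ : ℝ) * t j)))
        atTop (nhds 0) := by
  intro t ht ht₀
  obtain ⟨j₀, hj₀⟩ := Function.ne_iff.1 ht₀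
  have hx : ExpAveragesVanish fun (n : ℕ) j => a j n := fun ξ hξ => by
    unfold cesaroMean
    simpa only [e_apply] using h ξ hξ
  have ht_int : ∀ m : ℤ, t j₀ ≠ m := fun m hm => by
    have h₀ : (0 : ℝ) < m := hm ▸ (ht j₀).1.lt_of_ne' hj₀
    have h₁ : (m : ℝ) < 1 := hm ▸ (ht j₀).2
    norm_cast at h₀ h₁
    omega
  have := hx.tendsto_cesaroMean_e_sum_floor_mul ht_int
  unfold cesaroMean at this
  simpa only [e_apply] using this

/-- If every nontrivial real linear combination of `a₁(n), …, a_ℓ(n)` is uniformly distributed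
(in the sense that `(1/N) ∑_{n=1}^N e(a₁(n)t₁ + ⋯ + a_ℓ(n)t_ℓ) → 0` for all `(t₁,…,t_ℓ) ≠ 0`),
then the integer-part sequences `⌊a₁(n)⌋, …, ⌊a_ℓ(n)⌋` are good for equidistribution:
`(1/N) ∑_{n=1}^N e(⌊a₁(n)⌋t₁ + ⋯ + ⌊a_ℓ(n)⌋t_ℓ) → 0` for all `t₁,…,t_ℓ ∈ [0,1)` not all zero. -/
theorem stmt14 (ℓ : ℕ) (c : ℝ) (a : Fin ℓ → ℝ → ℝ)
    (h : ∀ t : Fin ℓ → ℝ, t ≠ 0 →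
      Tendsto (fun N : ℕ => (N : ℂ)⁻¹ * ∑ n ∈ Finset.Icc 1 N,
        Complex.exp (2 * ↑Real.pi * Complex.I * ↑(∑ j, a j (n : ℝ) * t j))) atTop (nhds 0)) :
    ∀ t : Fin ℓ → ℝ, (∀ j, t j ∈ Set.Ico (0 : ℝ) 1) → t ≠ 0 →
      Tendsto (fun N : ℕ => (N : ℂ)⁻¹ * ∑ n ∈ Finset.Icc 1 N,
        Complex.exp (2 * ↑Real.pi * Complex.I * ↑(∑ j, (⌊a j (n : ℝ)⌋ : ℝ) * t j)))
        atTop (nhds 0) :=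
  stmt14_general ℓ a h
end

section
/- Let b : ℝ₊ → ℝ₊ be nonnegative, differentiable for t ≥ t₀ with 0 ≤ b'(t) ≤ 1 and b' decreasing on [t₀, ∞), and b(t) ≤ t^{1−δ} for some δ > 0 and t ≥ t₀. Let (X, μ, T^t) be a measure-preserving flow and f ∈ L²(μ) a function whose spectral measure σ_f is supported on [−M, M]. Then with A_y(x) := (1/y) ∫_{t₀}^y |f(T^{b(t+c)}x) − f(T^{b(t)}x)|² dt for fixed c ≥ 0, we have ‖A_y‖_{L¹(μ)} ≤ C / y^δ for all y ≥ t₀, where C is a constant depending on M, c, ‖f‖_{L²} (but not y). In particular lim_{y→∞} A_y(x) = 0 for μ-almost every x. -/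
/-!
Since `T 0 = id`, the spectral identity gives
`∫ ‖f ∘ T s - f‖² dμ = ∫ (2 - 2 cos (2π s u)) dσ(u) ≤ (2π M s)² σ(ℝ)`, as `σ` lives on `[-M, M]`.
Writing `T (b (t + c)) = T (b (t + c) - b t) ∘ T (b t)` and using
`0 ≤ b (t + c) - b t ≤ c b' t` and `b' ≤ 1`, the integrand of `A_y` has `μ`-integral at most
`K b' t` with `K = (2π M c)² σ(ℝ)`; by Fubini `‖A_y‖₁ ≤ K (b y - b t₀) / y ≤ K y^(-δ)`.
Along `y = n ^ a` with `a δ = 2` these bounds are summable, so `A_{n^a} → 0` a.e. by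
Borel–Cantelli, and as `y A_y` increases with `y`, `A_y ≤ 2 ^ a A_{(n+1)^a}` for
`n ^ a ≤ y ≤ (n + 1) ^ a`.
-/

open MeasureTheory Filter Set Real
open scoped ENNReal Topology ComplexConjugate

section

variable {X : Type*} [MeasurableSpace X] {μ : Measure X}

lemma two_mul_measureReal_univ_sub_re_integral_exp_le {σ : Measure ℝ} [IsFiniteMeasure σ]
    {M : ℝ} (hσ : σ (Icc (-M) M)ᶜ = 0) (s : ℝ) :
    2 * σ.real univ - 2 * (∫ u, Complex.exp (2 * π * Complex.I * s * u) ∂σ).re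
      ≤ (2 * π * M * s) ^ 2 * σ.real univ := by
  have hexp : Integrable (fun u : ℝ => Complex.exp (2 * π * Complex.I * s * u)) σ :=
    (integrable_const (1 : ℝ)).mono' (by fun_prop) (ae_of_all _ fun u => by
      rw [Complex.norm_exp]; simp)
  have hre : (∫ u, Complex.exp (2 * π * Complex.I * s * u) ∂σ).re
      = ∫ u, cos (2 * π * s * u) ∂σ := by
    rw [← RCLike.re_to_complex, ← integral_re hexp]
    congr 1 with u
    simp [Complex.exp_re]
  have hcos : Integrable (fun u => cos (2 * π * s * u)) σ :=
    (integrable_const (1 : ℝ)).mono' (by fun_prop) (ae_of_all _ fun u => by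
      simpa using abs_cos_le_one _)
  have hM : ∀ᵐ u ∂σ, u ∈ Icc (-M) M := mem_ae_iff.2 hσ
  calc 2 * σ.real univ - 2 * (∫ u, Complex.exp (2 * π * Complex.I * s * u) ∂σ).re
      = ∫ u, (2 - 2 * cos (2 * π * s * u)) ∂σ := by
        rw [hre, integral_sub (integrable_const _) (hcos.const_mul 2), integral_const_mul,
          integral_const, smul_eq_mul, mul_comm]
    _ ≤ ∫ _u, (2 * π * M * s) ^ 2 ∂σ := by
        refine integral_mono_ae ((integrable_const _).sub (hcos.const_mul 2))
          (integrable_const _) ?_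
        filter_upwards [hM] with u hu
        have hu2 : u ^ 2 ≤ M ^ 2 := sq_le_sq' hu.1 hu.2
        calc 2 - 2 * cos (2 * π * s * u) ≤ (2 * π * s * u) ^ 2 := by
              linarith [one_sub_sq_div_two_le_cos (x := 2 * π * s * u)]
          _ = (2 * π * s) ^ 2 * u ^ 2 := by ring
          _ ≤ (2 * π * s) ^ 2 * M ^ 2 := by gcongr
          _ = (2 * π * M * s) ^ 2 := by ring
    _ = (2 * π * M * s) ^ 2 * σ.real univ := by
        rw [integral_const, smul_eq_mul, mul_comm]

lemma MeasureTheory.MeasurePreserving.integral_comp_of_aestronglyMeasurable {E : Type*}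
    [NormedAddCommGroup E] [NormedSpace ℝ E] {φ : X → X} (hφ : MeasurePreserving φ μ μ)
    {g : X → E} (hg : AEStronglyMeasurable g μ) :
    ∫ x, g (φ x) ∂μ = ∫ x, g x ∂μ := by
  rw [← integral_map hφ.measurable.aemeasurable (by rwa [hφ.map_eq]), hφ.map_eq]

lemma integral_norm_comp_sub_sq {φ : X → X} (hφ : MeasurePreserving φ μ μ) {f : X → ℂ}
    (hf : MemLp f 2 μ) :
    ∫ x, ‖f (φ x) - f x‖ ^ 2 ∂μ
      = 2 * ∫ x, ‖f x‖ ^ 2 ∂μ - 2 * (∫ x, f (φ x) * conj (f x) ∂μ).re := by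
  have hfφ : MemLp (fun x => f (φ x)) 2 μ := hf.comp_measurePreserving hφ
  have hsq : ∀ {g : X → ℂ}, MemLp g 2 μ → Integrable (fun x => ‖g x‖ ^ 2) μ := fun hg =>
    (memLp_two_iff_integrable_sq_norm hg.1).1 hg
  have hprod : Integrable (fun x => f (φ x) * conj (f x)) μ := hfφ.integrable_mul hf.star
  have hsum : Integrable (fun x => ‖f (φ x)‖ ^ 2 + ‖f x‖ ^ 2) μ := (hsq hfφ).add (hsq hf)
  have hre : Integrable (fun x => 2 * (f (φ x) * conj (f x)).re) μ := hprod.re.const_mul 2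
  have hcomp : ∫ x, ‖f (φ x)‖ ^ 2 ∂μ = ∫ x, ‖f x‖ ^ 2 ∂μ :=
    hφ.integral_comp_of_aestronglyMeasurable (hf.1.norm.pow 2)
  have hpt : ∀ x, ‖f (φ x) - f x‖ ^ 2
      = ‖f (φ x)‖ ^ 2 + ‖f x‖ ^ 2 - 2 * (f (φ x) * conj (f x)).re := fun x => by
    simp only [Complex.sq_norm, Complex.normSq_sub]
  simp only [hpt]
  rw [integral_sub hsum hre, integral_add (hsq hfφ) (hsq hf), integral_const_mul, hcomp,
    ← RCLike.re_to_complex, ← integral_re hprod]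
  simp only [RCLike.re_to_complex]
  ring

section Increments

variable {b : ℝ → ℝ} {t₀ : ℝ}

lemma sq_sub_le_sq_mul_deriv (hbdiff : ∀ t ≥ t₀, DifferentiableAt ℝ b t)
    (hb'01 : ∀ t ≥ t₀, 0 ≤ deriv b t ∧ deriv b t ≤ 1) (hanti : AntitoneOn (deriv b) (Ici t₀))
    {t c : ℝ} (ht : t₀ ≤ t) (hc : 0 ≤ c) :
    (b (t + c) - b t) ^ 2 ≤ c ^ 2 * deriv b t := by
  have hcont : ContinuousOn b (Ici t) := fun s hs =>
    (hbdiff s (ht.trans hs)).continuousAt.continuousWithinAt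
  have hdiff : DifferentiableOn ℝ b (interior (Ici t)) := fun s hs =>
    (hbdiff s (ht.trans (interior_subset hs))).differentiableWithinAt
  have htc : t + c ∈ Ici t := by simpa using hc
  have hlow : b t ≤ b (t + c) :=
    monotoneOn_of_deriv_nonneg (convex_Ici t) hcont hdiff
      (fun s hs => (hb'01 s (ht.trans (interior_subset hs))).1) self_mem_Ici htc
      (by linarith)
  have hup : b (t + c) - b t ≤ deriv b t * (t + c - t) :=
    (convex_Ici t).image_sub_le_mul_sub_of_deriv_le hcont hdiff
      (fun s hs => hanti ht (ht.trans (interior_subset hs)) (interior_subset hs))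
      t self_mem_Ici (t + c) htc (by linarith)
  obtain ⟨h0, h1⟩ := hb'01 t ht
  calc (b (t + c) - b t) ^ 2 ≤ (c * deriv b t) ^ 2 :=
        pow_le_pow_left₀ (sub_nonneg.2 hlow) (by linarith) 2
    _ = c ^ 2 * (deriv b t * deriv b t) := by ring
    _ ≤ c ^ 2 * deriv b t := by gcongr; exact mul_le_of_le_one_left h0 h1

lemma intervalIntegrable_deriv_of_antitoneOn (hanti : AntitoneOn (deriv b) (Ici t₀))
    {y : ℝ} (hy : t₀ ≤ y) : IntervalIntegrable (deriv b) volume t₀ y :=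
  (hanti.mono (by rw [uIcc_of_le hy]; exact Icc_subset_Ici_self)).intervalIntegrable

lemma setIntegral_Ioc_deriv_eq_sub (hbdiff : ∀ t ≥ t₀, DifferentiableAt ℝ b t)
    (hanti : AntitoneOn (deriv b) (Ici t₀)) {y : ℝ} (hy : t₀ ≤ y) :
    ∫ t in Ioc t₀ y, deriv b t = b y - b t₀ := by
  rw [← intervalIntegral.integral_of_le hy]
  refine intervalIntegral.integral_deriv_eq_sub (fun s hs => hbdiff s ?_)
    (intervalIntegrable_deriv_of_antitoneOn hanti hy)
  rw [uIcc_of_le hy] at hs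
  exact hs.1

end Increments

def IsSpectralMeasure (μ : Measure X) (T : ℝ → X → X) (f : X → ℂ) (σ : Measure ℝ) : Prop :=
  ∀ t : ℝ, ∫ x, f (T t x) * conj (f x) ∂μ = ∫ s, Complex.exp (2 * π * Complex.I * t * s) ∂σ

namespace IsSpectralMeasure

variable {T : ℝ → X → X} {f : X → ℂ} {σ : Measure ℝ}

lemma integral_norm_sq_eq (hσ : IsSpectralMeasure μ T f σ) (hT0 : T 0 = id) :
    ∫ x, ‖f x‖ ^ 2 ∂μ = σ.real univ := by
  have h := hσ 0
  simp only [hT0, id_eq, Complex.mul_conj, Complex.normSq_eq_norm_sq, integral_complex_ofReal,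
    Complex.ofReal_zero, mul_zero, zero_mul, Complex.exp_zero, integral_const, Complex.real_smul,
    mul_one] at h
  exact Complex.ofReal_injective h

lemma integral_norm_flow_sub_sq_le (hσ : IsSpectralMeasure μ T f σ) [IsFiniteMeasure σ]
    {M : ℝ} (hsupp : σ (Icc (-M) M)ᶜ = 0) (hT : ∀ t, MeasurePreserving (T t) μ μ)
    (hT0 : T 0 = id) (hTadd : ∀ s t, T (s + t) = T s ∘ T t) (hf : MemLp f 2 μ) (a₁ a₂ : ℝ) :
    ∫ x, ‖f (T a₂ x) - f (T a₁ x)‖ ^ 2 ∂μ ≤ (2 * π * M * (a₂ - a₁)) ^ 2 * σ.real univ := by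
  have hshift : ∀ x, T a₂ x = T (a₂ - a₁) (T a₁ x) := fun x => by
    rw [← Function.comp_apply (f := T (a₂ - a₁)), ← hTadd, sub_add_cancel]
  simp only [hshift]
  rw [(hT a₁).integral_comp_of_aestronglyMeasurable
      (g := fun z => ‖f (T (a₂ - a₁) z) - f z‖ ^ 2)
      (((hf.comp_measurePreserving (hT _)).1.sub hf.1).norm.pow 2),
    integral_norm_comp_sub_sq (hT _) hf, hσ.integral_norm_sq_eq hT0, hσ]
  exact two_mul_measureReal_univ_sub_re_integral_exp_le hsupp _

lemma integral_norm_flow_comp_add_sub_sq_le (hσ : IsSpectralMeasure μ T f σ)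
    [IsFiniteMeasure σ] {M : ℝ} (hsupp : σ (Icc (-M) M)ᶜ = 0)
    (hT : ∀ t, MeasurePreserving (T t) μ μ) (hT0 : T 0 = id)
    (hTadd : ∀ s t, T (s + t) = T s ∘ T t) (hf : MemLp f 2 μ) {b : ℝ → ℝ} {t₀ : ℝ}
    (hbdiff : ∀ t ≥ t₀, DifferentiableAt ℝ b t)
    (hb'01 : ∀ t ≥ t₀, 0 ≤ deriv b t ∧ deriv b t ≤ 1)
    (hanti : AntitoneOn (deriv b) (Ici t₀))
    {t c : ℝ} (ht : t₀ ≤ t) (hc : 0 ≤ c) :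
    ∫ x, ‖f (T (b (t + c)) x) - f (T (b t) x)‖ ^ 2 ∂μ
      ≤ (2 * π * M * c) ^ 2 * σ.real univ * deriv b t :=
  calc ∫ x, ‖f (T (b (t + c)) x) - f (T (b t) x)‖ ^ 2 ∂μ
      ≤ (2 * π * M * (b (t + c) - b t)) ^ 2 * σ.real univ :=
        hσ.integral_norm_flow_sub_sq_le hsupp hT hT0 hTadd hf _ _
    _ = (2 * π * M) ^ 2 * σ.real univ * (b (t + c) - b t) ^ 2 := by ring
    _ ≤ (2 * π * M) ^ 2 * σ.real univ * (c ^ 2 * deriv b t) := by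
        gcongr
        exact sq_sub_le_sq_mul_deriv hbdiff hb'01 hanti ht hc
    _ = (2 * π * M * c) ^ 2 * σ.real univ * deriv b t := by ring

end IsSpectralMeasure

section Fubini

lemma aestronglyMeasurable_comp_flow [SFinite μ] {T : ℝ → X → X}
    (hT : ∀ t, MeasurePreserving (T t) μ μ) (hTmeas : Measurable fun p : ℝ × X => T p.1 p.2)
    {ν : Measure ℝ} [SFinite ν] {β : ℝ → ℝ} (hβ : AEMeasurable β ν) {E : Type*}
    [TopologicalSpace E] {f : X → E} (hf : AEStronglyMeasurable f μ) :
    AEStronglyMeasurable (fun p : ℝ × X => f (T (β p.1) p.2)) (ν.prod μ) := by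
  set g : ℝ × X → X := fun p => T (hβ.mk β p.1) p.2
  have hg : Measurable g :=
    hTmeas.comp ((hβ.measurable_mk.comp measurable_fst).prodMk measurable_snd)
  have hmap : (ν.prod μ).map g = ν univ • μ := by
    ext s hs
    have hslice : ∀ t, μ (Prod.mk t ⁻¹' (g ⁻¹' s)) = μ s := fun t =>
      (hT (hβ.mk β t)).measure_preimage hs.nullMeasurableSet
    rw [Measure.map_apply hg hs, Measure.prod_apply (hg hs)]
    simp [hslice, mul_comm]
  have heq : (fun p : ℝ × X => T (β p.1) p.2) =ᵐ[ν.prod μ] g := by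
    filter_upwards [Measure.quasiMeasurePreserving_fst.ae_eq hβ.ae_eq_mk] with p hp
    exact congrArg (T · p.2) hp
  have hfg := (hf.mono_ac (hmap ▸ Measure.smul_absolutelyContinuous)).comp_measurable hg
  exact hfg.congr (heq.fun_comp f).symm

lemma integrable_uncurry_of_integral_norm_le {α β E : Type*} [MeasurableSpace α]
    [MeasurableSpace β] [NormedAddCommGroup E] {ν : Measure α} [IsFiniteMeasure ν]
    {μ : Measure β} [SFinite μ] {G : α → β → E}
    (hG : AEStronglyMeasurable (Function.uncurry G) (ν.prod μ))
    (hint : ∀ᵐ t ∂ν, Integrable (G t) μ) {K : ℝ} (hK : ∀ᵐ t ∂ν, ∫ x, ‖G t x‖ ∂μ ≤ K) :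
    Integrable (Function.uncurry G) (ν.prod μ) := by
  refine (integrable_prod_iff hG).2
    ⟨hint, (integrable_const K).mono' hG.norm.integral_prod_right' ?_⟩
  filter_upwards [hK] with t ht
  rwa [Real.norm_of_nonneg (integral_nonneg fun _ => norm_nonneg _)]

lemma ae_monotone_setIntegral_Ioc [SFinite μ] {G : ℝ → X → ℝ} (hG0 : ∀ t x, 0 ≤ G t x)
    {t₀ : ℝ} (hG : ∀ y, Integrable (Function.uncurry G) ((volume.restrict (Ioc t₀ y)).prod μ)) :
    ∀ᵐ x ∂μ, Monotone fun y => ∫ t in Ioc t₀ y, G t x := by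
  have h : ∀ᵐ x ∂μ, ∀ n : ℕ, IntegrableOn (fun t => G t x) (Ioc t₀ n) :=
    ae_all_iff.2 fun n => (hG n).prod_left_ae
  filter_upwards [h] with x hx y₁ y₂ hy
  exact setIntegral_mono_set ((hx ⌈y₂⌉₊).mono_set (Ioc_subset_Ioc_right (Nat.le_ceil y₂)))
    (ae_of_all _ fun t => hG0 t x) (Ioc_subset_Ioc_right hy).eventuallyLE

lemma integral_setIntegral_le_of_integral_le [SFinite μ] {G : ℝ → X → ℝ} {S : Set ℝ}
    (hG : Integrable (Function.uncurry G) ((volume.restrict S).prod μ)) (hS : MeasurableSet S)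
    {g : ℝ → ℝ} (hg : IntegrableOn g S) (hGg : ∀ t ∈ S, ∫ x, G t x ∂μ ≤ g t) :
    ∫ x, (∫ t in S, G t x) ∂μ ≤ ∫ t in S, g t := by
  rw [← integral_integral_swap hG]
  exact setIntegral_mono_on hG.integral_prod_left hg hS hGg

lemma integrable_uncurry_norm_flow_comp_add_sub_sq [SFinite μ] {T : ℝ → X → X}
    (hT : ∀ t, MeasurePreserving (T t) μ μ) (hTmeas : Measurable fun p : ℝ × X => T p.1 p.2)
    {f : X → ℂ} (hf : MemLp f 2 μ) {b : ℝ → ℝ} {t₀ c K : ℝ} (hb : ContinuousOn b (Ici t₀))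
    (hc : 0 ≤ c) (hK : ∀ t ≥ t₀, ∫ x, ‖f (T (b (t + c)) x) - f (T (b t) x)‖ ^ 2 ∂μ ≤ K)
    (y : ℝ) :
    Integrable (Function.uncurry fun t x => ‖f (T (b (t + c)) x) - f (T (b t) x)‖ ^ 2)
      ((volume.restrict (Ioc t₀ y)).prod μ) := by
  have hbc : ContinuousOn (fun t => b (t + c)) (Ioc t₀ y) :=
    hb.comp (continuous_add_const c).continuousOn fun t ht => by
      simp only [mem_Ici]; linarith [ht.1]
  have hfT : ∀ t, MemLp (fun x => f (T t x)) 2 μ := fun t => hf.comp_measurePreserving (hT t)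
  refine integrable_uncurry_of_integral_norm_le
    (((aestronglyMeasurable_comp_flow hT hTmeas (hbc.aemeasurable measurableSet_Ioc) hf.1).sub
      (aestronglyMeasurable_comp_flow hT hTmeas
        ((hb.mono fun t ht => ht.1.le).aemeasurable measurableSet_Ioc) hf.1)).norm.pow 2)
    (ae_of_all _ fun t => ?_) (K := K) ?_
  · exact (memLp_two_iff_integrable_sq_norm ((hfT _).sub (hfT _)).1).1 ((hfT _).sub (hfT _))
  · filter_upwards [ae_restrict_mem measurableSet_Ioc] with t ht
    simpa only [norm_pow, norm_norm] using hK t ht.1.le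

end Fubini

section BorelCantelli

lemma ae_tendsto_zero_of_summable_integral {f : ℕ → X → ℝ} (hf : ∀ n, Integrable (f n) μ)
    (hf0 : ∀ n, 0 ≤ᵐ[μ] f n) (hs : Summable fun n => ∫ x, f n x ∂μ) :
    ∀ᵐ x ∂μ, Tendsto (fun n => f n x) atTop (𝓝 0) := by
  have hm : ∀ n, AEMeasurable (fun x => ENNReal.ofReal (f n x)) μ := fun n =>
    (hf n).aemeasurable.ennreal_ofReal
  have hfin : ∫⁻ x, ∑' n, ENNReal.ofReal (f n x) ∂μ ≠ ∞ := by
    rw [lintegral_tsum hm]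
    simp_rw [← ofReal_integral_eq_lintegral_ofReal (hf _) (hf0 _)]
    rw [← ENNReal.ofReal_tsum_of_nonneg (fun n => integral_nonneg_of_ae (hf0 n)) hs]
    exact ENNReal.ofReal_ne_top
  filter_upwards [ae_lt_top' (AEMeasurable.tsum hm) hfin, ae_all_iff.2 hf0] with x hx hx0
  have h := (ENNReal.tendsto_toReal ENNReal.zero_ne_top).comp
    (ENNReal.tendsto_atTop_zero_of_tsum_ne_top hx.ne)
  simpa [Function.comp_def, ENNReal.toReal_ofReal (hx0 _)] using h

lemma tendsto_inv_mul_of_monotone_of_tendsto_rpow {φ : ℝ → ℝ} {a : ℝ} (ha : 0 < a)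
    (hmono : Monotone φ) (hφ0 : ∀ y, 0 ≤ φ y)
    (h : Tendsto (fun n : ℕ => ((n : ℝ) ^ a)⁻¹ * φ ((n : ℝ) ^ a)) atTop (𝓝 0)) :
    Tendsto (fun y => y⁻¹ * φ y) atTop (𝓝 0) := by
  set N : ℝ → ℕ := fun y => ⌊y ^ a⁻¹⌋₊
  have hN : Tendsto N atTop atTop :=
    tendsto_nat_floor_atTop.comp (tendsto_rpow_atTop (inv_pos.2 ha))
  have hupper : Tendsto
      (fun y => 2 ^ a * (((N y + 1 : ℕ) : ℝ) ^ a)⁻¹ * φ (((N y + 1 : ℕ) : ℝ) ^ a)) atTop (𝓝 0) := by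
    simpa [mul_assoc] using (h.comp ((tendsto_add_atTop_nat 1).comp hN)).const_mul (2 ^ a)
  refine tendsto_of_tendsto_of_tendsto_of_le_of_le' tendsto_const_nhds hupper ?_ ?_
  · filter_upwards [eventually_ge_atTop 0] with y hy using mul_nonneg (inv_nonneg.2 hy) (hφ0 y)
  · filter_upwards [eventually_ge_atTop 1] with y hy
    set n := N y
    have hn1 : (1 : ℝ) ≤ n := by
      exact_mod_cast Nat.one_le_floor_iff _ |>.2 (one_le_rpow hy (inv_nonneg.2 ha.le))
    have hny : (n : ℝ) ^ a ≤ y := by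
      calc (n : ℝ) ^ a ≤ (y ^ a⁻¹) ^ a :=
            rpow_le_rpow (Nat.cast_nonneg _) (Nat.floor_le (by positivity)) ha.le
        _ = y := rpow_inv_rpow (by linarith) ha.ne'
    have hyn : y ≤ ((n : ℝ) + 1) ^ a := by
      calc y = (y ^ a⁻¹) ^ a := (rpow_inv_rpow (by linarith) ha.ne').symm
        _ ≤ ((n : ℝ) + 1) ^ a :=
            rpow_le_rpow (by positivity) (Nat.lt_floor_add_one _).le ha.le
    have hdouble : ((n : ℝ) ^ a)⁻¹ ≤ 2 ^ a * (((n : ℝ) + 1) ^ a)⁻¹ := by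
      have h2n : ((n : ℝ) ^ a)⁻¹ = 2 ^ a * ((2 * n : ℝ) ^ a)⁻¹ := by
        rw [mul_rpow zero_le_two (Nat.cast_nonneg _)]
        field_simp
      rw [h2n]
      gcongr
      linarith
    calc y⁻¹ * φ y ≤ ((n : ℝ) ^ a)⁻¹ * φ (((n : ℝ) + 1) ^ a) :=
          mul_le_mul (inv_anti₀ (by positivity) hny) (hmono hyn) (hφ0 y) (by positivity)
      _ ≤ 2 ^ a * (((n : ℝ) + 1) ^ a)⁻¹ * φ (((n : ℝ) + 1) ^ a) := by
          gcongr
          exact hφ0 _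
      _ = 2 ^ a * (((n + 1 : ℕ) : ℝ) ^ a)⁻¹ * φ (((n + 1 : ℕ) : ℝ) ^ a) := by push_cast; rfl

lemma ae_tendsto_inv_mul_zero_of_integral_le_rpow {Φ : ℝ → X → ℝ} {K δ y₀ : ℝ} (hδ : 0 < δ)
    (hint : ∀ y, Integrable (Φ y) μ) (hΦ0 : ∀ y x, 0 ≤ Φ y x)
    (hmono : ∀ᵐ x ∂μ, Monotone fun y => Φ y x)
    (hbound : ∀ y ≥ y₀, ∫ x, Φ y x ∂μ ≤ K * y ^ (1 - δ)) :
    ∀ᵐ x ∂μ, Tendsto (fun y => y⁻¹ * Φ y x) atTop (𝓝 0) := by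
  -- `a δ = 2` makes the bounds `K (n ^ a) ^ (-δ) = K / n ^ 2` summable.
  set a := 2 / δ
  have ha : 0 < a := by positivity
  have hsum : Summable fun n : ℕ => ∫ x, ((n : ℝ) ^ a)⁻¹ * Φ ((n : ℝ) ^ a) x ∂μ := by
    refine Summable.of_norm_bounded_eventually
      ((Real.summable_nat_pow_inv.2 one_lt_two).mul_left K) ?_
    have hev : ∀ᶠ n : ℕ in atTop, y₀ ≤ (n : ℝ) ^ a ∧ 1 ≤ n :=
      (((tendsto_rpow_atTop ha).comp tendsto_natCast_atTop_atTop).eventually_ge_atTop y₀).and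
        (eventually_ge_atTop 1)
    filter_upwards [Nat.cofinite_eq_atTop ▸ hev] with n ⟨hn, hn1⟩
    have hv : 0 < (n : ℝ) ^ a := by positivity
    rw [integral_const_mul, Real.norm_of_nonneg
      (mul_nonneg (inv_nonneg.2 hv.le) (integral_nonneg (hΦ0 _)))]
    calc ((n : ℝ) ^ a)⁻¹ * ∫ x, Φ ((n : ℝ) ^ a) x ∂μ
        ≤ ((n : ℝ) ^ a)⁻¹ * (K * ((n : ℝ) ^ a) ^ (1 - δ)) := by gcongr; exact hbound _ hn
      _ = K * (((n : ℝ) ^ a) ^ δ)⁻¹ := by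
          rw [rpow_sub hv, rpow_one]
          field_simp
      _ = K * ((n : ℝ) ^ 2)⁻¹ := by
          rw [← rpow_mul (Nat.cast_nonneg _), div_mul_cancel₀ _ hδ.ne', rpow_two]
  have hae := ae_tendsto_zero_of_summable_integral (fun n => (hint _).const_mul _)
    (fun n => ae_of_all _ fun x => mul_nonneg (inv_nonneg.2 (by positivity)) (hΦ0 _ _)) hsum
  filter_upwards [hae, hmono] with x hx hxm
  exact tendsto_inv_mul_of_monotone_of_tendsto_rpow ha hxm (fun y => hΦ0 y x) hx

end BorelCantelli

end

/-- Let `b` be nonnegative with `0 ≤ b' ≤ 1` and `b'` decreasing on `[t₀, ∞)`, and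
`b(t) ≤ t^{1-δ}` there. If `f ∈ L²(μ)` has spectral measure supported on `[-M, M]`, then for
fixed `c ≥ 0` the quantity `A_y(x) = (1/y) ∫_{t₀}^y |f(T^{b(t+c)}x) − f(T^{b(t)}x)|² dt`
satisfies `‖A_y‖_{L¹(μ)} ≤ C / y^δ` for all `y ≥ t₀` (with `C` independent of `y`), and in
particular `A_y(x) → 0` for `μ`-a.e. `x`. -/
theorem stmt16 {X : Type*} [MeasurableSpace X] (μ : Measure X) [IsProbabilityMeasure μ]
    (T : ℝ → X → X) (hT : ∀ t, MeasurePreserving (T t) μ μ)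
    (hT0 : T 0 = id) (hTadd : ∀ s t, T (s + t) = T s ∘ T t)
    (hTmeas : Measurable fun p : ℝ × X => T p.1 p.2)
    (b : ℝ → ℝ) (t₀ δ : ℝ) (ht₀ : 0 ≤ t₀) (hδ : 0 < δ)
    (hbpos : ∀ t ≥ (0 : ℝ), 0 ≤ b t)
    (hbdiff : ∀ t ≥ t₀, DifferentiableAt ℝ b t)
    (hb'01 : ∀ t ≥ t₀, 0 ≤ deriv b t ∧ deriv b t ≤ 1)
    (hb'dec : ∀ t₁ t₂, t₀ ≤ t₁ → t₁ ≤ t₂ → deriv b t₂ ≤ deriv b t₁)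
    (hbgrow : ∀ t ≥ t₀, b t ≤ t ^ (1 - δ))
    (f : X → ℂ) (hf : MemLp f 2 μ)
    (M : ℝ) (σ : Measure ℝ) (hσfin : IsFiniteMeasure σ)
    (hσsupp : σ (Set.Icc (-M) M)ᶜ = 0)
    (hσspec : ∀ t : ℝ, ∫ x, f (T t x) * (starRingEnd ℂ) (f x) ∂μ =
      ∫ s, Complex.exp (2 * ↑Real.pi * Complex.I * (t : ℂ) * (s : ℂ)) ∂σ)
    (c : ℝ) (hc : 0 ≤ c) :
    (∃ C : ℝ, ∀ y : ℝ, t₀ ≤ y → 0 < y →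
      (∫ x, (y⁻¹ * ∫ t in Set.Ioc t₀ y, ‖f (T (b (t + c)) x) - f (T (b t) x)‖ ^ 2) ∂μ)
        ≤ C / y ^ δ) ∧
    ∀ᵐ x ∂μ, Tendsto (fun y : ℝ =>
        y⁻¹ * ∫ t in Set.Ioc t₀ y, ‖f (T (b (t + c)) x) - f (T (b t) x)‖ ^ 2)
      atTop (nhds 0) := by
  have hanti : AntitoneOn (deriv b) (Ici t₀) := fun t₁ h₁ t₂ _ h => hb'dec t₁ t₂ h₁ h
  set K := (2 * π * M * c) ^ 2 * σ.real univ
  set H : ℝ → X → ℝ := fun t x => ‖f (T (b (t + c)) x) - f (T (b t) x)‖ ^ 2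
  have hH : ∀ t ≥ t₀, ∫ x, H t x ∂μ ≤ K * deriv b t := fun t ht =>
    IsSpectralMeasure.integral_norm_flow_comp_add_sub_sq_le hσspec hσsupp hT hT0 hTadd hf
      hbdiff hb'01 hanti ht hc
  have hprod : ∀ y, Integrable (Function.uncurry H) ((volume.restrict (Ioc t₀ y)).prod μ) :=
    integrable_uncurry_norm_flow_comp_add_sub_sq hT hTmeas hf
      (fun t ht => (hbdiff t ht).continuousAt.continuousWithinAt) hc
      fun t ht => (hH t ht).trans (mul_le_of_le_one_right (by positivity) (hb'01 t ht).2)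
  have hbound : ∀ y ≥ t₀, ∫ x, (∫ t in Ioc t₀ y, H t x) ∂μ ≤ K * y ^ (1 - δ) := fun y hy =>
    calc ∫ x, (∫ t in Ioc t₀ y, H t x) ∂μ ≤ ∫ t in Ioc t₀ y, K * deriv b t :=
          integral_setIntegral_le_of_integral_le (hprod y) measurableSet_Ioc
            ((intervalIntegrable_deriv_of_antitoneOn hanti hy).1.const_mul K)
            fun t ht => hH t ht.1.le
      _ = K * (b y - b t₀) := by
          rw [integral_const_mul, setIntegral_Ioc_deriv_eq_sub hbdiff hanti hy]
      _ ≤ K * y ^ (1 - δ) := by gcongr; linarith [hbgrow y hy, hbpos t₀ ht₀]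
  refine ⟨⟨K, fun y hy hy0 => ?_⟩, ae_tendsto_inv_mul_zero_of_integral_le_rpow hδ
    (fun y => (hprod y).integral_prod_right) (fun y x => integral_nonneg fun t => by positivity)
    (ae_monotone_setIntegral_Ioc (fun t x => by positivity) hprod) hbound⟩
  rw [integral_const_mul]
  calc y⁻¹ * ∫ x, (∫ t in Ioc t₀ y, H t x) ∂μ ≤ y⁻¹ * (K * y ^ (1 - δ)) := by
        gcongr; exact hbound y hy
    _ = K / y ^ δ := by rw [rpow_sub hy0, rpow_one]; field_simp
end

section
/- Let (X, μ, T) be an ergodic system, let f_{n,k} ∈ L^∞(μ) be bounded by 1, let N_k → ∞, and suppose f := weak-lim_{k→∞} Avg_{n ∈ [N_k]} f_{n,k} exists in L²(μ). If there exist a > 0, a set Λ ⊂ ℕ with positive lower density, and unimodular eigenfunctions χ_m (m ∈ ℕ) such that Re(∫ (T^m f · conj f) · χ_m dμ) > a for all m ∈ Λ, then liminf_{N→∞} Avg over m, m' ∈ Λ∩[N] of limsup_{k→∞} Avg over n ∈ [N_k] of Re(∫ conj(f_{n,k}) · T^{m−m'} f_{n,k} · T^{−m'}(χ_m · conj(χ_{m'}))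 dμ) > 0. -/
/-!
For `m ∈ Λ`, testing the weak limit against `T^{-m}(f · conj χ_m)` and moving `T^m` across the
integral turns `Re ∫ T^m f · conj f · χ_m > a` into the limit over `k` of
`𝔼_{n ∈ [N_k]} Re ∫ T^m f_{n,k} · χ_m · conj f`. Summing over `m ∈ S = Λ ∩ [N]` and applying
Cauchy–Schwarz twice (in `L²(μ)` against `f`, with `‖f‖_∞ ≤ C`, and then to the average over `n`)
gives, for large `k`,
`(|S| a)² ≤ C² ∑_{m, m' ∈ S} 𝔼_n Re ∫ (T^m f_{n,k} χ_m) · conj (T^{m'} f_{n,k} χ_{m'})`,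
and composing with `T^{-m'}` turns each integral into the correlation `shiftCorrelation`. Taking
`limsup` in `k` keeps the normalised double sum above `a² / C²` whenever `S ≠ ∅`, which by positive
lower density holds for all large `N`.
-/

open MeasureTheory Filter ComplexConjugate

lemma limsup_finset_sum_le {ι κ : Type*} {l : Filter κ} [l.NeBot] (s : Finset ι)
    {u : ι → κ → ℝ} (hle : ∀ i ∈ s, IsBoundedUnder (· ≤ ·) l (u i))
    (hge : ∀ i ∈ s, IsBoundedUnder (· ≥ ·) l (u i)) :
    limsup (fun k => ∑ i ∈ s, u i k) l ≤ ∑ i ∈ s, limsup (u i) l := by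
  induction s using Finset.cons_induction with
  | empty => simp
  | cons i s hi ih =>
    simp only [Finset.forall_mem_cons] at hle hge
    have hsum_le := isBoundedUnder_le_sum s hle.2
    have hsum_ge := isBoundedUnder_ge_sum s hge.2
    rw [Finset.sum_fn] at hsum_le hsum_ge
    simp only [Finset.sum_cons]
    exact (limsup_add_le hge.1 hle.1 hsum_ge.isCoboundedUnder_le hsum_le).trans
      (add_le_add le_rfl (ih hle.2 hge.2))

lemma inv_card_sq_mul_sum_sum_limsup_le_one {ι κ : Type*} {l : Filter κ} [l.NeBot]
    (S : Finset ι) {v : ι → ι → κ → ℝ} (hv : ∀ i j k, |v i j k| ≤ 1) :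
    ((S.card : ℝ))⁻¹ ^ 2 * ∑ i ∈ S, ∑ j ∈ S, limsup (v i j) l ≤ 1 := by
  have hlimsup : ∀ i j, limsup (v i j) l ≤ 1 := fun i j =>
    limsup_le_of_le (isBoundedUnder_of ⟨-1, fun k => (abs_le.1 (hv i j k)).1⟩).isCoboundedUnder_le
      (Eventually.of_forall fun k => (abs_le.1 (hv i j k)).2)
  calc ((S.card : ℝ))⁻¹ ^ 2 * ∑ i ∈ S, ∑ j ∈ S, limsup (v i j) l
      ≤ ((S.card : ℝ))⁻¹ ^ 2 * ∑ i ∈ S, ∑ j ∈ S, (1 : ℝ) := by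
        gcongr with i _ j _
        exact hlimsup i j
    _ ≤ 1 := by
        rcases S.eq_empty_or_nonempty with rfl | hS
        · simp
        · have hcard : (S.card : ℝ) ≠ 0 := by exact_mod_cast hS.card_pos.ne'
          simp only [Finset.sum_const, nsmul_eq_mul, mul_one, inv_pow]
          rw [← sq, inv_mul_cancel₀ (pow_ne_zero 2 hcard)]

lemma abs_inv_mul_sum_Icc_le_one (N : ℕ) {x : ℕ → ℝ} (hx : ∀ n, |x n| ≤ 1) :
    |(N : ℝ)⁻¹ * ∑ n ∈ Finset.Icc 1 N, x n| ≤ 1 := by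
  rw [abs_mul, abs_inv, Nat.abs_cast]
  calc (N : ℝ)⁻¹ * |∑ n ∈ Finset.Icc 1 N, x n| ≤ (N : ℝ)⁻¹ * N := by
        gcongr
        refine (Finset.abs_sum_le_sum_abs _ _).trans ?_
        simpa using Finset.sum_le_sum fun n (_ : n ∈ Finset.Icc 1 N) => hx n
    _ ≤ 1 := by
        rcases Nat.eq_zero_or_pos N with rfl | hN
        · simp
        · rw [inv_mul_cancel₀ (by positivity)]

lemma sq_inv_mul_sum_Icc_le (N : ℕ) (x : ℕ → ℝ) :
    ((N : ℝ)⁻¹ * ∑ n ∈ Finset.Icc 1 N, x n) ^ 2 ≤ (N : ℝ)⁻¹ * ∑ n ∈ Finset.Icc 1 N, x n ^ 2 := by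
  simpa [div_eq_inv_mul] using
    sum_div_card_sq_le_sum_sq_div_card (s := Finset.Icc 1 N) (f := x)

lemma eventually_nonempty_of_liminf_card_div_pos {α : Type*} {s : ℕ → Finset α}
    (hs : 0 < liminf (fun N => ((s N).card : ℝ) / N) atTop) : ∀ᶠ N in atTop, (s N).Nonempty := by
  filter_upwards [eventually_lt_of_lt_liminf hs (isBoundedUnder_of ⟨0, fun N => by positivity⟩)]
    with N hN
  by_contra h
  simp [Finset.not_nonempty_iff_eq_empty.1 h] at hN

section Integrals

variable {X : Type*} [MeasurableSpace X] {μ : Measure X}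

lemma sq_integral_le_integral_sq [IsProbabilityMeasure μ] {g : X → ℝ} (hg : MemLp g 2 μ) :
    (∫ x, g x ∂μ) ^ 2 ≤ ∫ x, g x ^ 2 ∂μ := by
  have h := ProbabilityTheory.variance_nonneg g μ
  rw [ProbabilityTheory.variance_eq_sub hg] at h
  simpa using h

lemma sq_re_integral_mul_conj_le [IsProbabilityMeasure μ] {G f : X → ℂ} {C : ℝ}
    (hG : MemLp G 2 μ) (hfC : ∀ᵐ x ∂μ, ‖f x‖ ≤ C) :
    (∫ x, G x * conj (f x) ∂μ).re ^ 2 ≤ C ^ 2 * ∫ x, ‖G x‖ ^ 2 ∂μ := by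
  have hnorm : ‖∫ x, G x * conj (f x) ∂μ‖ ≤ C * ∫ x, ‖G x‖ ∂μ :=
    calc ‖∫ x, G x * conj (f x) ∂μ‖ ≤ ∫ x, ‖G x * conj (f x)‖ ∂μ :=
          norm_integral_le_integral_norm _
      _ ≤ ∫ x, C * ‖G x‖ ∂μ := by
          refine integral_mono_of_nonneg (ae_of_all _ fun _ => norm_nonneg _)
            ((hG.integrable one_le_two).norm.const_mul C) (hfC.mono fun x hx => ?_)
          dsimp only
          rw [norm_mul, RCLike.norm_conj, mul_comm]
          exact mul_le_mul_of_nonneg_right hx (norm_nonneg _)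
      _ = C * ∫ x, ‖G x‖ ∂μ := integral_const_mul _ _
  calc (∫ x, G x * conj (f x) ∂μ).re ^ 2 ≤ ‖∫ x, G x * conj (f x) ∂μ‖ ^ 2 :=
        sq_le_sq.2 ((Complex.abs_re_le_norm _).trans (le_abs_self _))
    _ ≤ (C * ∫ x, ‖G x‖ ∂μ) ^ 2 := pow_le_pow_left₀ (norm_nonneg _) hnorm 2
    _ ≤ C ^ 2 * ∫ x, ‖G x‖ ^ 2 ∂μ := by
        rw [mul_pow]
        exact mul_le_mul_of_nonneg_left (sq_integral_le_integral_sq hG.norm) (sq_nonneg C)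

lemma norm_sum_sq_eq_sum_sum_re_mul_conj {ι : Type*} (s : Finset ι) (z : ι → ℂ) :
    ‖∑ i ∈ s, z i‖ ^ 2 = ∑ i ∈ s, ∑ j ∈ s, (z i * conj (z j)).re := by
  rw [← Complex.normSq_eq_norm_sq, ← Complex.ofReal_re (Complex.normSq _), ← Complex.mul_conj,
    map_sum, Finset.sum_mul_sum, Complex.re_sum]
  simp only [Complex.re_sum]

lemma integral_norm_sum_sq {ι : Type*} (s : Finset ι) {u : ι → X → ℂ}
    (hu : ∀ i ∈ s, MemLp (u i) 2 μ) :
    ∫ x, ‖∑ i ∈ s, u i x‖ ^ 2 ∂μ = ∑ i ∈ s, ∑ j ∈ s, (∫ x, u i x * conj (u j x) ∂μ).re := by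
  have hint : ∀ i ∈ s, ∀ j ∈ s, Integrable (fun x => u i x * conj (u j x)) μ :=
    fun i hi j hj => (hu i hi).integrable_mul (hu j hj).star
  have hint_re : ∀ i ∈ s, ∀ j ∈ s, Integrable (fun x => (u i x * conj (u j x)).re) μ :=
    fun i hi j hj => (hint i hi j hj).re
  simp_rw [norm_sum_sq_eq_sum_sum_re_mul_conj]
  rw [integral_finsetSum _ fun i hi => integrable_finsetSum _ fun j hj => hint_re i hi j hj]
  refine Finset.sum_congr rfl fun i hi => ?_
  rw [integral_finsetSum _ fun j hj => hint_re i hi j hj]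
  exact Finset.sum_congr rfl fun j hj => integral_re (hint i hi j hj)

lemma MeasureTheory.MemLp.exists_pos_ae_norm_le {E : Type*} [NormedAddCommGroup E] {f : X → E}
    (hf : MemLp f ⊤ μ) :
    ∃ C : ℝ, 0 < C ∧ ∀ᵐ x ∂μ, ‖f x‖ ≤ C := by
  obtain ⟨C, hC⟩ := (eLpNormEssSup_lt_top_iff_isBoundedUnder (f := f) (μ := μ)).1
    (by rw [← eLpNorm_exponent_top]; exact hf.2)
  refine ⟨C + 1, by positivity, (eventually_map.1 hC).mono fun x hx => ?_⟩
  have : ‖f x‖ ≤ C := by exact_mod_cast hx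
  linarith

end Integrals

structure IsMeasurePreservingAction {X : Type*} [MeasurableSpace X] (μ : Measure X)
    (T : ℤ → X → X) : Prop where
  measurePreserving : ∀ n, MeasurePreserving (T n) μ μ
  map_zero : T 0 = id
  map_add : ∀ m n, T (m + n) = T m ∘ T n

noncomputable def shiftCorrelation {X : Type*} [MeasurableSpace X] (μ : Measure X) (T : ℤ → X → X)
    (g : X → ℂ) (χ : ℕ → X → ℂ) (m m' : ℕ) : ℝ :=
  (∫ x, conj (g x) * g (T ((m : ℤ) - (m' : ℤ)) x) *
    (χ m (T (-(m' : ℤ)) x) * conj (χ m' (T (-(m' : ℤ)) x))) ∂μ).re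

namespace IsMeasurePreservingAction

variable {X : Type*} [MeasurableSpace X] {μ : Measure X} {T : ℤ → X → X}
  (hT : IsMeasurePreservingAction μ T)
include hT

lemma apply_apply (p q : ℤ) (x : X) : T p (T q x) = T (p + q) x := by
  rw [hT.map_add]; rfl

lemma apply_neg_apply (m : ℤ) (x : X) : T m (T (-m) x) = x := by
  rw [hT.apply_apply, add_neg_cancel, hT.map_zero, id]

lemma neg_apply_apply (m : ℤ) (x : X) : T (-m) (T m x) = x := by
  simpa using hT.apply_neg_apply (-m) x

def measurableEquiv (m : ℤ) : X ≃ᵐ X where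
  toFun := T m
  invFun := T (-m)
  left_inv := hT.neg_apply_apply m
  right_inv := hT.apply_neg_apply m
  measurable_toFun := (hT.measurePreserving m).measurable
  measurable_invFun := (hT.measurePreserving (-m)).measurable

lemma integral_comp {E : Type*} [NormedAddCommGroup E] [NormedSpace ℝ E] (m : ℤ) (g : X → E) :
    ∫ x, g (T m x) ∂μ = ∫ x, g x ∂μ :=
  (hT.measurePreserving m).integral_comp' (f := hT.measurableEquiv m) g

lemma memLp_comp {p : ENNReal} {g : X → ℂ} (hg : MemLp g p μ) (m : ℤ) :
    MemLp (fun x => g (T m x)) p μ :=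
  hg.comp_measurePreserving (hT.measurePreserving m)

lemma integral_shift_mul_conj_shift (g : X → ℂ) (χ : ℕ → X → ℂ) (m m' : ℕ) :
    (∫ x, g (T m x) * χ m x * conj (g (T m' x) * χ m' x) ∂μ).re =
      shiftCorrelation μ T g χ m m' := by
  rw [shiftCorrelation]
  conv_rhs => rw [← hT.integral_comp (m' : ℤ)]
  congr 2
  funext x
  rw [hT.apply_apply, sub_add_cancel, hT.neg_apply_apply, map_mul]
  ring

section Probability

variable [IsProbabilityMeasure μ]

lemma abs_shiftCorrelation_le_one {g : X → ℂ} {χ : ℕ → X → ℂ}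
    (hg : ∀ᵐ x ∂μ, ‖g x‖ ≤ 1) (hχ : ∀ m, ∀ᵐ x ∂μ, ‖χ m x‖ ≤ 1) (m m' : ℕ) :
    |shiftCorrelation μ T g χ m m'| ≤ 1 := by
  have hshift : ∀ (n : ℤ) {φ : X → ℂ}, (∀ᵐ x ∂μ, ‖φ x‖ ≤ 1) → ∀ᵐ x ∂μ, ‖φ (T n x)‖ ≤ 1 :=
    fun n _ hφ => (hT.measurePreserving n).quasiMeasurePreserving.ae hφ
  refine (Complex.abs_re_le_norm _).trans
    ((norm_integral_le_of_norm_le_const (C := 1) ?_).trans (by simp))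
  filter_upwards [hg, hshift _ hg, hshift _ (hχ m), hshift _ (hχ m')] with x h₁ h₂ h₃ h₄
  simp only [norm_mul, RCLike.norm_conj]
  exact mul_le_one₀ (mul_le_one₀ h₁ (norm_nonneg _) h₂) (by positivity)
    (mul_le_one₀ h₃ (norm_nonneg _) h₄)



lemma sq_sum_re_integral_shift_le (S : Finset ℕ) {g : X → ℂ} (hg : MemLp g ⊤ μ)
    {χ : ℕ → X → ℂ} (hχ : ∀ m, MemLp (χ m) ⊤ μ) {f : X → ℂ} (hf : MemLp f ⊤ μ) {C : ℝ}
    (hfC : ∀ᵐ x ∂μ, ‖f x‖ ≤ C) :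
    (∑ m ∈ S, (∫ x, g (T m x) * conj (f x) * χ m x ∂μ).re) ^ 2 ≤
      C ^ 2 * ∑ m ∈ S, ∑ m' ∈ S, shiftCorrelation μ T g χ m m' := by
  have hu : ∀ m : ℕ, MemLp (fun x => g (T m x) * χ m x) ⊤ μ :=
    fun m => (hχ m).mul' (r := ⊤) (hT.memLp_comp hg m)
  have hsum : ∑ m ∈ S, (∫ x, g (T m x) * conj (f x) * χ m x ∂μ).re =
      (∫ x, (∑ m ∈ S, g (T m x) * χ m x) * conj (f x) ∂μ).re := by
    have hint : ∀ m : ℕ, Integrable (fun x => g (T m x) * conj (f x) * χ m x) μ :=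
      fun m => ((hχ m).mul' (r := ⊤) (hf.star.mul' (r := ⊤) (hT.memLp_comp hg m))).integrable le_top
    rw [← Complex.re_sum, ← integral_finsetSum _ fun m _ => hint m]
    congr 2
    funext x
    rw [Finset.sum_mul]
    exact Finset.sum_congr rfl fun m _ => by ring
  calc (∑ m ∈ S, (∫ x, g (T m x) * conj (f x) * χ m x ∂μ).re) ^ 2
      ≤ C ^ 2 * ∫ x, ‖∑ m ∈ S, g (T m x) * χ m x‖ ^ 2 ∂μ := by
        rw [hsum]
        exact sq_re_integral_mul_conj_le
          (memLp_finsetSum _ fun m _ => (hu m).mono_exponent le_top) hfC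
    _ = C ^ 2 * ∑ m ∈ S, ∑ m' ∈ S, shiftCorrelation μ T g χ m m' := by
        rw [integral_norm_sum_sq S (u := fun m x => g (T m x) * χ m x)
          fun m _ => (hu m).mono_exponent le_top]
        simp only [hT.integral_shift_mul_conj_shift]


lemma abs_inv_mul_sum_shiftCorrelation_le_one {g : ℕ → X → ℂ} (hg : ∀ n, ∀ᵐ x ∂μ, ‖g n x‖ ≤ 1)
    {χ : ℕ → X → ℂ} (hχ : ∀ m, ∀ᵐ x ∂μ, ‖χ m x‖ ≤ 1) (N m m' : ℕ) :
    |(N : ℝ)⁻¹ * ∑ n ∈ Finset.Icc 1 N, shiftCorrelation μ T (g n) χ m m'| ≤ 1 :=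
  abs_inv_mul_sum_Icc_le_one N fun n => hT.abs_shiftCorrelation_le_one (hg n) hχ m m'

lemma sq_sum_avg_re_integral_shift_le (S : Finset ℕ) (N : ℕ) {g : ℕ → X → ℂ}
    (hg : ∀ n, MemLp (g n) ⊤ μ) {χ : ℕ → X → ℂ} (hχ : ∀ m, MemLp (χ m) ⊤ μ) {f : X → ℂ}
    (hf : MemLp f ⊤ μ) {C : ℝ} (hfC : ∀ᵐ x ∂μ, ‖f x‖ ≤ C) :
    (∑ m ∈ S, (N : ℝ)⁻¹ * ∑ n ∈ Finset.Icc 1 N,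
        (∫ x, g n (T m x) * conj (f x) * χ m x ∂μ).re) ^ 2 ≤
      C ^ 2 * ∑ m ∈ S, ∑ m' ∈ S,
        (N : ℝ)⁻¹ * ∑ n ∈ Finset.Icc 1 N, shiftCorrelation μ T (g n) χ m m' := by
  calc (∑ m ∈ S, (N : ℝ)⁻¹ * ∑ n ∈ Finset.Icc 1 N,
        (∫ x, g n (T m x) * conj (f x) * χ m x ∂μ).re) ^ 2
      = ((N : ℝ)⁻¹ * ∑ n ∈ Finset.Icc 1 N, ∑ m ∈ S,
          (∫ x, g n (T m x) * conj (f x) * χ m x ∂μ).re) ^ 2 := by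
        rw [← Finset.mul_sum, Finset.sum_comm]
    _ ≤ (N : ℝ)⁻¹ * ∑ n ∈ Finset.Icc 1 N, (∑ m ∈ S,
          (∫ x, g n (T m x) * conj (f x) * χ m x ∂μ).re) ^ 2 := sq_inv_mul_sum_Icc_le _ _
    _ ≤ (N : ℝ)⁻¹ * ∑ n ∈ Finset.Icc 1 N,
          C ^ 2 * ∑ m ∈ S, ∑ m' ∈ S, shiftCorrelation μ T (g n) χ m m' := by
        gcongr with n
        exact hT.sq_sum_re_integral_shift_le S (hg n) hχ hf hfC
    _ = C ^ 2 * ∑ m ∈ S, ∑ m' ∈ S,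
          (N : ℝ)⁻¹ * ∑ n ∈ Finset.Icc 1 N, shiftCorrelation μ T (g n) χ m m' := by
        simp only [Finset.mul_sum]
        rw [Finset.sum_comm]
        refine Finset.sum_congr rfl fun m _ => ?_
        rw [Finset.sum_comm]
        exact Finset.sum_congr rfl fun m' _ => Finset.sum_congr rfl fun n _ => by ring

variable {fnk : ℕ → ℕ → X → ℂ} (hfnk : ∀ n k, MemLp (fnk n k) ⊤ μ) {Nk : ℕ → ℕ} {f : X → ℂ}
  (hf : MemLp f ⊤ μ)
  (hweak : ∀ h : X → ℂ, MemLp h 2 μ →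
    Tendsto (fun k : ℕ => ∫ x, ((Nk k : ℂ)⁻¹ * ∑ n ∈ Finset.Icc 1 (Nk k), fnk n k x) *
      conj (h x) ∂μ) atTop (nhds (∫ x, f x * conj (h x) ∂μ)))
include hfnk hf hweak

lemma tendsto_avg_re_integral_shift {φ : X → ℂ} (hφ : MemLp φ ⊤ μ) (m : ℤ) :
    Tendsto (fun k => (Nk k : ℝ)⁻¹ * ∑ n ∈ Finset.Icc 1 (Nk k),
        (∫ x, fnk n k (T m x) * conj (f x) * φ x ∂μ).re) atTop
      (nhds (∫ x, f (T m x) * conj (f x) * φ x ∂μ).re) := by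
  set h : X → ℂ := fun x => f (T (-m) x) * conj (φ (T (-m) x))
  have hh : MemLp h 2 μ :=
    ((hT.memLp_comp hφ (-m)).star.mul' (r := ⊤) (hT.memLp_comp hf (-m))).mono_exponent le_top
  have htest : ∀ g : X → ℂ, ∫ x, g x * conj (h x) ∂μ = ∫ x, g (T m x) * conj (f x) * φ x ∂μ := by
    intro g
    rw [← hT.integral_comp m]
    congr 1
    funext x
    simp only [h, hT.neg_apply_apply, map_mul, Complex.conj_conj]
    ring
  have hint : ∀ n k, Integrable (fun x => fnk n k (T m x) * conj (f x) * φ x) μ := fun n k =>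
    (hφ.mul' (r := ⊤) (hf.star.mul' (r := ⊤) (hT.memLp_comp (hfnk n k) m))).integrable le_top
  have hlim := (Complex.continuous_re.tendsto _).comp (hweak h hh)
  rw [htest f] at hlim
  refine hlim.congr fun k => ?_
  rw [Function.comp_apply, htest]
  calc (∫ x, ((Nk k : ℂ)⁻¹ * ∑ n ∈ Finset.Icc 1 (Nk k), fnk n k (T m x)) * conj (f x) * φ x ∂μ).re
      = (((Nk k : ℝ)⁻¹ : ℝ) * ∑ n ∈ Finset.Icc 1 (Nk k),
          ∫ x, fnk n k (T m x) * conj (f x) * φ x ∂μ : ℂ).re := by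
        rw [← integral_finsetSum _ fun n _ => hint n k, ← integral_const_mul]
        push_cast
        congr 2
        funext x
        simp only [Finset.mul_sum, Finset.sum_mul]
        exact Finset.sum_congr rfl fun n _ => by ring
    _ = (Nk k : ℝ)⁻¹ * ∑ n ∈ Finset.Icc 1 (Nk k),
          (∫ x, fnk n k (T m x) * conj (f x) * φ x ∂μ).re := by
        rw [Complex.re_ofReal_mul, Complex.re_sum]

variable {χ : ℕ → X → ℂ} (hχ : ∀ m, MemLp (χ m) ⊤ μ) {C : ℝ} (hfC : ∀ᵐ x ∂μ, ‖f x‖ ≤ C)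
  {S : Finset ℕ} (hS : S.Nonempty) {a : ℝ} (ha : 0 ≤ a)
  (hpos : ∀ m ∈ S, a < (∫ x, f (T m x) * conj (f x) * χ m x ∂μ).re)
include hχ hfC hS ha hpos

lemma eventually_sq_card_mul_le :
    ∀ᶠ k in atTop, ((S.card : ℝ) * a) ^ 2 ≤ C ^ 2 * ∑ m ∈ S, ∑ m' ∈ S,
      (Nk k : ℝ)⁻¹ * ∑ n ∈ Finset.Icc 1 (Nk k), shiftCorrelation μ T (fnk n k) χ m m' := by
  have hlim := tendsto_finsetSum S fun m _ =>
    hT.tendsto_avg_re_integral_shift hfnk hf hweak (hχ m) m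
  have hgt : (S.card : ℝ) * a < ∑ m ∈ S, (∫ x, f (T m x) * conj (f x) * χ m x ∂μ).re := by
    simpa using Finset.sum_lt_sum_of_nonempty hS hpos
  filter_upwards [hlim.eventually (eventually_gt_nhds hgt)] with k hk
  exact (pow_le_pow_left₀ (by positivity) hk.le 2).trans
    (hT.sq_sum_avg_re_integral_shift_le S (Nk k) (hfnk · k) hχ hf hfC)

lemma sq_div_sq_le_inv_card_sq_mul_sum_limsup (hC : 0 < C)
    (hfnk₁ : ∀ n k, ∀ᵐ x ∂μ, ‖fnk n k x‖ ≤ 1) (hχ₁ : ∀ m, ∀ᵐ x ∂μ, ‖χ m x‖ ≤ 1) :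
    a ^ 2 / C ^ 2 ≤ ((S.card : ℝ))⁻¹ ^ 2 * ∑ m ∈ S, ∑ m' ∈ S, limsup (fun k =>
      (Nk k : ℝ)⁻¹ * ∑ n ∈ Finset.Icc 1 (Nk k), shiftCorrelation μ T (fnk n k) χ m m') atTop := by
  set s : ℕ × ℕ → ℕ → ℝ := fun p k =>
    (Nk k : ℝ)⁻¹ * ∑ n ∈ Finset.Icc 1 (Nk k), shiftCorrelation μ T (fnk n k) χ p.1 p.2
  have hs : ∀ p k, |s p k| ≤ 1 := fun p k =>
    hT.abs_inv_mul_sum_shiftCorrelation_le_one (hfnk₁ · k) hχ₁ _ p.1 p.2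
  have hlimsup : ((S.card : ℝ) * a) ^ 2 / C ^ 2 ≤ ∑ p ∈ S ×ˢ S, limsup (s p) atTop :=
    calc ((S.card : ℝ) * a) ^ 2 / C ^ 2 ≤ limsup (fun k => ∑ p ∈ S ×ˢ S, s p k) atTop := by
          refine le_limsup_of_frequently_le ?_ (isBoundedUnder_of ⟨(S ×ˢ S).card, fun k =>
            (Finset.sum_le_card_nsmul _ _ 1 fun p _ => (abs_le.1 (hs p k)).2).trans (by simp)⟩)
          refine (hT.eventually_sq_card_mul_le hfnk hf hweak hχ hfC hS ha hpos).frequently.mono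
            fun k hk => ?_
          rw [div_le_iff₀ (by positivity), Finset.sum_product, mul_comm _ (C ^ 2)]
          exact hk
      _ ≤ ∑ p ∈ S ×ˢ S, limsup (s p) atTop := limsup_finset_sum_le _
          (fun p _ => isBoundedUnder_of ⟨1, fun k => (abs_le.1 (hs p k)).2⟩)
          (fun p _ => isBoundedUnder_of ⟨-1, fun k => (abs_le.1 (hs p k)).1⟩)
  rw [Finset.sum_product] at hlimsup
  calc a ^ 2 / C ^ 2 = ((S.card : ℝ))⁻¹ ^ 2 * (((S.card : ℝ) * a) ^ 2 / C ^ 2) := by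
        have : (S.card : ℝ) ≠ 0 := by exact_mod_cast hS.card_pos.ne'
        field_simp
    _ ≤ _ := mul_le_mul_of_nonneg_left hlimsup (by positivity)

end Probability

end IsMeasurePreservingAction

theorem stmt17_general {X : Type*} [MeasurableSpace X] (μ : Measure X) [IsProbabilityMeasure μ]
    (T : ℤ → X → X) (hT : ∀ n, MeasurePreserving (T n) μ μ)
    (hT0 : T 0 = id) (hTadd : ∀ m n, T (m + n) = T m ∘ T n)
    (fnk : ℕ → ℕ → X → ℂ) (hfnkL : ∀ n k, MemLp (fnk n k) ⊤ μ)
    (hfnk1 : ∀ n k, ∀ᵐ x ∂μ, ‖fnk n k x‖ ≤ 1)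
    (Nk : ℕ → ℕ)
    (f : X → ℂ) (hfL : MemLp f ⊤ μ)
    (hweak : ∀ h : X → ℂ, MemLp h 2 μ →
      Tendsto (fun k : ℕ => ∫ x, ((Nk k : ℂ)⁻¹ * ∑ n ∈ Finset.Icc 1 (Nk k), fnk n k x) *
          (starRingEnd ℂ) (h x) ∂μ) atTop
        (nhds (∫ x, f x * (starRingEnd ℂ) (h x) ∂μ)))
    (a : ℝ) (ha : 0 < a)
    (Λ : Set ℕ) [DecidablePred (· ∈ Λ)]
    (hΛ : 0 < Filter.liminf (fun N : ℕ =>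
      (((Finset.Icc 1 N).filter (· ∈ Λ)).card : ℝ) / (N : ℝ)) Filter.atTop)
    (χ : ℕ → X → ℂ)
    (hχ : ∀ m, MemLp (χ m) ⊤ μ ∧ (∀ᵐ x ∂μ, ‖χ m x‖ = 1) ∧
      ∃ t : ℝ, (fun x => χ m (T 1 x)) =ᵐ[μ]
        fun x => Complex.exp (2 * ↑Real.pi * Complex.I * (t : ℂ)) * χ m x)
    (hpos : ∀ m ∈ Λ, a < (∫ x, (f (T (m : ℤ) x) * (starRingEnd ℂ) (f x)) * χ m x ∂μ).re) :
    0 < Filter.liminf (fun N : ℕ =>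
      ((((Finset.Icc 1 N).filter (· ∈ Λ)).card : ℝ))⁻¹ ^ 2 *
      ∑ m ∈ (Finset.Icc 1 N).filter (· ∈ Λ), ∑ m' ∈ (Finset.Icc 1 N).filter (· ∈ Λ),
        Filter.limsup (fun k : ℕ => (Nk k : ℝ)⁻¹ * ∑ n ∈ Finset.Icc 1 (Nk k),
          (∫ x, (starRingEnd ℂ) (fnk n k x) * fnk n k (T ((m : ℤ) - (m' : ℤ)) x) *
            (χ m (T (-(m' : ℤ)) x) * (starRingEnd ℂ) (χ m' (T (-(m' : ℤ)) x))) ∂μ).re)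
          Filter.atTop) Filter.atTop := by
  have hTa : IsMeasurePreservingAction μ T := ⟨hT, hT0, hTadd⟩
  obtain ⟨C, hC, hfC⟩ := hfL.exists_pos_ae_norm_le
  have hχ₁ : ∀ m, ∀ᵐ x ∂μ, ‖χ m x‖ ≤ 1 := fun m => (hχ m).2.1.mono fun _ hx => hx.le
  refine (by positivity : 0 < a ^ 2 / C ^ 2).trans_le (le_liminf_of_le ?_ ?_)
  · refine (isBoundedUnder_of ⟨1, fun N => ?_⟩).isCoboundedUnder_ge
    exact inv_card_sq_mul_sum_sum_limsup_le_one _ fun m m' k =>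
      hTa.abs_inv_mul_sum_shiftCorrelation_le_one (hfnk1 · k) hχ₁ (Nk k) m m'
  · filter_upwards [eventually_nonempty_of_liminf_card_div_pos hΛ] with N hN
    exact hTa.sq_div_sq_le_inv_card_sq_mul_sum_limsup hfnkL hfL hweak (fun m => (hχ m).1) hfC hN
      ha.le (fun m hm => hpos m (Finset.mem_filter.1 hm).2) hC hfnk1 hχ₁

/-- Let `(X, μ, T)` be an ergodic system, `f_{n,k}` bounded by 1, `N_k → ∞`, and
`f = weak-lim_k 𝔼_{n ∈ [N_k]} f_{n,k}` in `L²(μ)`. If there are `a > 0`, a set `Λ ⊆ ℕ` of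
positive lower density, and unimodular eigenfunctions `χ_m` with
`Re ∫ (T^m f ⋅ conj f) ⋅ χ_m dμ > a` for all `m ∈ Λ`, then
`liminf_N 𝔼_{m, m' ∈ Λ ∩ [N]} limsup_k 𝔼_{n ∈ [N_k]}
  Re ∫ conj(f_{n,k}) ⋅ T^{m−m'} f_{n,k} ⋅ T^{−m'}(χ_m conj χ_{m'}) dμ > 0`. -/
theorem stmt17 {X : Type*} [MeasurableSpace X] (μ : Measure X) [IsProbabilityMeasure μ]
    (T : ℤ → X → X) (hT : ∀ n, MeasurePreserving (T n) μ μ)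
    (hT0 : T 0 = id) (hTadd : ∀ m n, T (m + n) = T m ∘ T n)
    (hErg : Ergodic (T 1) μ)
    (fnk : ℕ → ℕ → X → ℂ) (hfnkL : ∀ n k, MemLp (fnk n k) ⊤ μ)
    (hfnk1 : ∀ n k, ∀ᵐ x ∂μ, ‖fnk n k x‖ ≤ 1)
    (Nk : ℕ → ℕ) (hNk : Tendsto Nk atTop atTop)
    (f : X → ℂ) (hfL : MemLp f ⊤ μ)
    (hweak : ∀ h : X → ℂ, MemLp h 2 μ →
      Tendsto (fun k : ℕ => ∫ x, ((Nk k : ℂ)⁻¹ * ∑ n ∈ Finset.Icc 1 (Nk k), fnk n k x) *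
          (starRingEnd ℂ) (h x) ∂μ) atTop
        (nhds (∫ x, f x * (starRingEnd ℂ) (h x) ∂μ)))
    (a : ℝ) (ha : 0 < a)
    (Λ : Set ℕ) [DecidablePred (· ∈ Λ)]
    (hΛ : 0 < Filter.liminf (fun N : ℕ =>
      (((Finset.Icc 1 N).filter (· ∈ Λ)).card : ℝ) / (N : ℝ)) Filter.atTop)
    (χ : ℕ → X → ℂ)
    (hχ : ∀ m, MemLp (χ m) ⊤ μ ∧ (∀ᵐ x ∂μ, ‖χ m x‖ = 1) ∧
      ∃ t : ℝ, (fun x => χ m (T 1 x)) =ᵐ[μ]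
        fun x => Complex.exp (2 * ↑Real.pi * Complex.I * (t : ℂ)) * χ m x)
    (hpos : ∀ m ∈ Λ, a < (∫ x, (f (T (m : ℤ) x) * (starRingEnd ℂ) (f x)) * χ m x ∂μ).re) :
    0 < Filter.liminf (fun N : ℕ =>
      ((((Finset.Icc 1 N).filter (· ∈ Λ)).card : ℝ))⁻¹ ^ 2 *
      ∑ m ∈ (Finset.Icc 1 N).filter (· ∈ Λ), ∑ m' ∈ (Finset.Icc 1 N).filter (· ∈ Λ),
        Filter.limsup (fun k : ℕ => (Nk k : ℝ)⁻¹ * ∑ n ∈ Finset.Icc 1 (Nk k),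
          (∫ x, (starRingEnd ℂ) (fnk n k x) * fnk n k (T ((m : ℤ) - (m' : ℤ)) x) *
            (χ m (T (-(m' : ℤ)) x) * (starRingEnd ℂ) (χ m' (T (-(m' : ℤ)) x))) ∂μ).re)
          Filter.atTop) Filter.atTop :=
  stmt17_general μ T hT hT0 hTadd fnk hfnkL hfnk1 Nk f hfL hweak a ha Λ hΛ χ hχ hpos
end

section
/- Let (X, μ, T) be a measure-preserving system and a_1, ..., a_ℓ : ℕ → ℤ sequences and f_1, ..., f_ℓ ∈ L^∞(μ) bounded by 1 such that limsup_{N→∞} ‖Avg_{n∈[N]} ∏_{j=1}^ℓ T^{a_j(n)} f_j‖_{L²(μ)} > 0. Then for every m ∈ {1,...,ℓ} there exist N_k → ∞ and functions g_k ∈ L^∞(μ) with ‖g_k‖_∞ ≤ 1 such that the weak limit f̃_m := lim_k Avg_{n∈[N_k]} T^{−a_m(n)} g_k · ∏_{j≠m} T^{a_j(n)−a_m(n)} conj(f_j) exists in L²(μ), f̃_m ∈ L^∞(μ), and limsup_{N→∞} ‖Avg_{n∈[N]} T^{a_m(n)} f̃_m · ∏_{j≠m} T^{a_j(n)} f_j‖_{L²(μ)}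 > 0. -/
/-!
Write `A_N` for the multiple average, `B_N φ` for the same average with `f_m` replaced by `φ`,
and `D_N g` for the dual average. Since every `T n` preserves `μ`, `D_N` is the adjoint of `B_N`,
so `‖A_N‖₂² = ⟨B_N f_m, A_N⟩ = ⟨f_m, D_N A_N⟩`. Along a sequence `N_k` with `‖A_{N_k}‖₂² > c > 0`
the dual functions `D_{N_k} A_{N_k}` are bounded by `1`, so by Banach–Alaoglu a subsequence
converges weakly in `L²` to some `f̃_m`; it is again bounded by `1` and correlates with `f_m` by at
least `c`, hence is nonzero. Finally
`‖f̃_m‖₂² = lim ⟨f̃_m, D_{N_k} A_{N_k}⟩ = lim ⟨B_{N_k} f̃_m, A_{N_k}⟩ ≤ liminf ‖B_{N_k} f̃_m‖₂`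
by Cauchy–Schwarz, which makes the averages of `f̃_m` against the other `f_j` large infinitely
often.
-/

open MeasureTheory Filter ComplexConjugate TopologicalSpace
open scoped InnerProductSpace Topology ENNReal

noncomputable def cesaro (u : ℕ → ℂ) (N : ℕ) : ℂ := (N : ℂ)⁻¹ * ∑ n ∈ Finset.Icc 1 N, u n

section Cesaro

variable {u : ℕ → ℂ} {N : ℕ}

theorem norm_cesaro_le_one (hu : ∀ n, ‖u n‖ ≤ 1) : ‖cesaro u N‖ ≤ 1 := by
  rcases N.eq_zero_or_pos with rfl | hN
  · simp [cesaro]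
  calc ‖cesaro u N‖ ≤ (N : ℝ)⁻¹ * ∑ n ∈ Finset.Icc 1 N, ‖u n‖ := by
        rw [cesaro, norm_mul, norm_inv, Complex.norm_natCast]
        gcongr
        exact norm_sum_le _ _
    _ ≤ (N : ℝ)⁻¹ * ∑ n ∈ Finset.Icc 1 N, 1 := by gcongr with n; exact hu n
    _ = 1 := by simp [hN.ne']

theorem cesaro_mul (c : ℂ) : cesaro u N * c = cesaro (fun n => u n * c) N := by
  simp only [cesaro, mul_assoc, Finset.sum_mul]

theorem mul_conj_cesaro (c : ℂ) : c * conj (cesaro u N) = cesaro (fun n => c * conj (u n)) N := by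
  simp only [cesaro, map_mul, map_inv₀, map_natCast, map_sum, Finset.mul_sum]
  ring_nf

theorem integral_cesaro {X : Type*} [MeasurableSpace X] {μ : Measure X} {v : ℕ → X → ℂ}
    (hv : ∀ n, Integrable (v n) μ) :
    ∫ x, cesaro (fun n => v n x) N ∂μ = cesaro (fun n => ∫ x, v n x ∂μ) N := by
  rw [cesaro, ← integral_finsetSum _ fun n _ => hv n, ← integral_const_mul]
  rfl

end Cesaro

section UnitBounded

variable {X : Type*} [MeasurableSpace X] {μ : Measure X}

def UnitBounded (μ : Measure X) (u : X → ℂ) : Prop :=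
  AEStronglyMeasurable u μ ∧ ∀ᵐ x ∂μ, ‖u x‖ ≤ 1

namespace UnitBounded

variable {u v : X → ℂ}

theorem mul (hu : UnitBounded μ u) (hv : UnitBounded μ v) :
    UnitBounded μ (fun x => u x * v x) := by
  refine ⟨hu.1.mul hv.1, ?_⟩
  filter_upwards [hu.2, hv.2] with x hux hvx
  simpa using mul_le_one₀ hux (norm_nonneg _) hvx

theorem _root_.UnitBounded.conj (hu : UnitBounded μ u) : UnitBounded μ (fun x => conj (u x)) :=
  ⟨Complex.continuous_conj.comp_aestronglyMeasurable hu.1, by simpa using hu.2⟩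

theorem finset_prod {ι : Type*} (s : Finset ι) {w : ι → X → ℂ}
    (hw : ∀ i ∈ s, UnitBounded μ (w i)) : UnitBounded μ (fun x => ∏ i ∈ s, w i x) := by
  refine ⟨Finset.aestronglyMeasurable_fun_prod _ fun i hi => (hw i hi).1, ?_⟩
  filter_upwards [(eventually_all_finset s).2 fun i hi => (hw i hi).2] with x hx
  rw [norm_prod]
  exact Finset.prod_le_one (fun _ _ => norm_nonneg _) hx

theorem comp_measurePreserving (hu : UnitBounded μ u) {T : X → X}
    (hT : MeasurePreserving T μ μ) : UnitBounded μ (fun x => u (T x)) :=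
  ⟨hu.1.comp_measurePreserving hT, hT.quasiMeasurePreserving.ae hu.2⟩

theorem cesaro {w : ℕ → X → ℂ} (hw : ∀ n, UnitBounded μ (w n)) (N : ℕ) :
    UnitBounded μ (fun x => cesaro (fun n => w n x) N) := by
  refine ⟨(Finset.aestronglyMeasurable_fun_sum _ fun n _ => (hw n).1).const_mul _, ?_⟩
  filter_upwards [ae_all_iff.2 fun n => (hw n).2] with x hx
  exact norm_cesaro_le_one hx

theorem memLp [IsFiniteMeasure μ] (hu : UnitBounded μ u) (p : ℝ≥0∞) : MemLp u p μ :=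
  (memLp_top_of_bound hu.1 1 hu.2).mono_exponent le_top

theorem integrable [IsFiniteMeasure μ] (hu : UnitBounded μ u) : Integrable u μ :=
  memLp_one_iff_integrable.1 (hu.memLp 1)

theorem integral_norm_sq_le_one [IsProbabilityMeasure μ] (hu : UnitBounded μ u) :
    ∫ x, ‖u x‖ ^ 2 ∂μ ≤ 1 := by
  calc ∫ x, ‖u x‖ ^ 2 ∂μ ≤ ∫ _, (1 : ℝ) ∂μ := by
        refine integral_mono_ae ((hu.memLp 2).integrable_norm_pow two_ne_zero)
          (integrable_const 1) ?_
        filter_upwards [hu.2] with x hx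
        exact pow_le_one₀ (norm_nonneg _) hx
    _ = 1 := by simp

end UnitBounded

end UnitBounded

section L2

variable {X : Type*} [MeasurableSpace X] {μ : Measure X} {u v : X → ℂ}

theorem integral_mul_conj_eq_inner (hu : MemLp u 2 μ) (hv : MemLp v 2 μ) :
    ∫ x, u x * conj (v x) ∂μ = ⟪hv.toLp v, hu.toLp u⟫_ℂ := by
  rw [L2.inner_def]
  refine integral_congr_ae ?_
  filter_upwards [hu.coeFn_toLp, hv.coeFn_toLp] with x hux hvx
  rw [RCLike.inner_apply, hux, hvx, mul_comm]

theorem integral_mul_conj_self (u : X → ℂ) :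
    ∫ x, u x * conj (u x) ∂μ = ((∫ x, ‖u x‖ ^ 2 ∂μ : ℝ) : ℂ) := by
  rw [← integral_complex_ofReal]
  simp only [Complex.mul_conj', Complex.ofReal_pow]

theorem norm_toLp_sq (hu : MemLp u 2 μ) : ‖hu.toLp u‖ ^ 2 = ∫ x, ‖u x‖ ^ 2 ∂μ := by
  rw [← inner_self_eq_norm_sq (𝕜 := ℂ), ← integral_mul_conj_eq_inner hu hu,
    integral_mul_conj_self]
  rfl

theorem norm_integral_mul_conj_sq_le (hu : MemLp u 2 μ) (hv : MemLp v 2 μ) :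
    ‖∫ x, u x * conj (v x) ∂μ‖ ^ 2 ≤ (∫ x, ‖u x‖ ^ 2 ∂μ) * ∫ x, ‖v x‖ ^ 2 ∂μ := by
  rw [integral_mul_conj_eq_inner hu hv, ← norm_toLp_sq hu, ← norm_toLp_sq hv, ← mul_pow,
    mul_comm]
  exact pow_le_pow_left₀ (norm_nonneg _) (norm_inner_le_norm _ _) 2

theorem norm_integral_mul_conj_sq_le_of_unitBounded [IsProbabilityMeasure μ]
    (hu : MemLp u 2 μ) (hv : UnitBounded μ v) :
    ‖∫ x, u x * conj (v x) ∂μ‖ ^ 2 ≤ ∫ x, ‖u x‖ ^ 2 ∂μ :=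
  (norm_integral_mul_conj_sq_le hu (hv.memLp 2)).trans <|
    mul_le_of_le_one_right (integral_nonneg fun _ => by positivity) hv.integral_norm_sq_le_one

end L2

theorem exists_strictMono_tendsto_inner {𝕜 H : Type*} [RCLike 𝕜] [NormedAddCommGroup H]
    [InnerProductSpace 𝕜 H] [CompleteSpace H] {d : ℕ → H} {r : ℝ} (hd : ∀ k, ‖d k‖ ≤ r) :
    ∃ (ψ : ℕ → ℕ) (F : H), StrictMono ψ ∧
      ∀ h, Tendsto (fun k => ⟪d (ψ k), h⟫_𝕜) atTop (𝓝 ⟪F, h⟫_𝕜) := by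
  -- Banach–Alaoglu in the separable closed span `K` of the sequence; `Kᗮ` sees only zeros.
  set K := (Submodule.span 𝕜 (Set.range d)).topologicalClosure
  have hdK : ∀ k, d k ∈ K := fun k =>
    Submodule.le_topologicalClosure _ (Submodule.subset_span ⟨k, rfl⟩)
  have : SeparableSpace K := by
    refine IsSeparable.separableSpace ?_
    rw [Submodule.topologicalClosure_coe]
    exact (Set.countable_range d).isSeparable.span.closure
  have : CompleteSpace K := (Submodule.isClosed_topologicalClosure _).completeSpace_coe
  obtain ⟨φ, -, ψ, hψ, hφ⟩ := WeakDual.isSeqCompact_closedBall 𝕜 K 0 r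
    (x := fun k => StrongDual.toWeakDual (InnerProductSpace.toDual 𝕜 K ⟨d k, hdK k⟩))
    fun k => by simpa using hd k
  refine ⟨ψ, (InnerProductSpace.toDual 𝕜 K).symm φ, hψ, fun h => ?_⟩
  obtain ⟨y, hy, z, hz, rfl⟩ := K.exists_add_mem_mem_orthogonal h
  have hzK : ∀ w ∈ K, ⟪w, z⟫_𝕜 = 0 := fun w hw => (Submodule.mem_orthogonal K z).1 hz w hw
  simp only [inner_add_right, hzK _ (hdK _), hzK _ (Submodule.coe_mem _), add_zero]
  have := ((WeakDual.eval_continuous (⟨y, hy⟩ : K)).tendsto φ).comp hφ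
  have hφy : ⟪((InnerProductSpace.toDual 𝕜 K).symm φ : H), y⟫_𝕜 = φ ⟨y, hy⟩ :=
    InnerProductSpace.toDual_symm_apply (x := (⟨y, hy⟩ : K)) (y := φ)
  rw [hφy]
  simpa [Function.comp_def] using this

section WeakL2

variable {X : Type*} [MeasurableSpace X] {μ : Measure X}

def TendstoWeakL2 (μ : Measure X) (u : ℕ → X → ℂ) (F : X → ℂ) : Prop :=
  ∀ h : X → ℂ, MemLp h 2 μ →
    Tendsto (fun k => ∫ x, u k x * conj (h x) ∂μ) atTop (𝓝 (∫ x, F x * conj (h x) ∂μ))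

theorem exists_strictMono_tendstoWeakL2 {u : ℕ → X → ℂ} {C : ℝ} (hu : ∀ k, MemLp (u k) 2 μ)
    (hC : ∀ k, ∫ x, ‖u k x‖ ^ 2 ∂μ ≤ C) :
    ∃ (ψ : ℕ → ℕ) (F : X → ℂ), StrictMono ψ ∧ MemLp F 2 μ ∧
      TendstoWeakL2 μ (fun k => u (ψ k)) F := by
  have hnorm : ∀ k, ‖(hu k).toLp (u k)‖ ≤ √C := fun k =>
    Real.le_sqrt_of_sq_le ((norm_toLp_sq (hu k)).trans_le (hC k))
  obtain ⟨ψ, F, hψ, hF⟩ := exists_strictMono_tendsto_inner (𝕜 := ℂ) hnorm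
  refine ⟨ψ, F, hψ, Lp.memLp F, fun h hh => ?_⟩
  have hlim := (Complex.continuous_conj.tendsto _).comp (hF (hh.toLp h))
  simp only [Function.comp_def, inner_conj_symm] at hlim
  rw [integral_mul_conj_eq_inner (Lp.memLp F) hh, Lp.toLp_coeFn]
  simpa only [integral_mul_conj_eq_inner (hu _) hh] using hlim

theorem TendstoWeakL2.unitBounded [IsFiniteMeasure μ] {u : ℕ → X → ℂ} {F : X → ℂ}
    (hlim : TendstoWeakL2 μ u F) (hu : ∀ k, UnitBounded μ (u k)) (hF : MemLp F 2 μ) :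
    UnitBounded μ F := by
  refine ⟨hF.1, ?_⟩
  suffices h : ∀ s, MeasurableSet s → ∫ x in s, ‖F x‖ ∂μ ≤ μ.real s by
    refine ae_le_of_forall_setIntegral_le (hF.integrable one_le_two).norm (integrable_const 1)
      fun s hs _ => ?_
    simpa using h s hs
  intro s hs
  -- test the weak convergence against the phase of `F` on `s`
  set q : X → ℂ := s.indicator fun x => F x / (‖F x‖ : ℂ)
  have hphase : ∀ x, ‖F x / (‖F x‖ : ℂ)‖ ≤ 1 := fun x => by
    rw [norm_div, Complex.norm_real, norm_norm]
    exact div_self_le_one _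
  have hq : UnitBounded μ q := by
    refine ⟨(hF.1.div₀ (Complex.continuous_ofReal.comp_aestronglyMeasurable hF.1.norm)).indicator
      hs, Eventually.of_forall fun x => ?_⟩
    by_cases hx : x ∈ s
    · simpa [q, hx] using hphase x
    · simp [q, hx]
  have hFq : ∫ x, F x * conj (q x) ∂μ = ((∫ x in s, ‖F x‖ ∂μ : ℝ) : ℂ) := by
    rw [← integral_indicator hs, ← integral_complex_ofReal]
    refine integral_congr_ae (Eventually.of_forall fun x => ?_)
    by_cases hx : x ∈ s
    · rcases eq_or_ne (F x) 0 with h0 | h0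
      · simp [q, hx, h0]
      · simp only [q, hx, Set.indicator_of_mem, map_div₀, Complex.conj_ofReal]
        rw [mul_div_assoc', Complex.mul_conj', sq, mul_div_assoc, div_self (by simpa using h0),
          mul_one]
    · simp [q, hx]
  have hbound : ∀ k, ‖∫ x, u k x * conj (q x) ∂μ‖ ≤ μ.real s := fun k => by
    rw [← integral_indicator_one hs]
    refine norm_integral_le_of_norm_le ((integrable_const 1).indicator hs) ?_
    filter_upwards [(hu k).2] with x hx
    by_cases hxs : x ∈ s
    · simpa [q, hxs] using mul_le_one₀ hx (norm_nonneg _) (hphase x)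
    · simp [q, hxs]
  have hlimq := le_of_tendsto' (hlim q (hq.memLp 2)).norm hbound
  rw [hFq, Complex.norm_real] at hlimq
  exact (le_abs_self _).trans hlimq

theorem TendstoWeakL2.integral_norm_sq_pos [IsProbabilityMeasure μ] {u : ℕ → X → ℂ}
    {F v : X → ℂ} (hlim : TendstoWeakL2 μ u F) (hF : MemLp F 2 μ) (hv : UnitBounded μ v)
    {c : ℝ} (hc : 0 < c) (hcu : ∀ k, c ≤ ‖∫ x, u k x * conj (v x) ∂μ‖) :
    0 < ∫ x, ‖F x‖ ^ 2 ∂μ := by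
  have hcF : c ≤ ‖∫ x, F x * conj (v x) ∂μ‖ :=
    ge_of_tendsto' (hlim v (hv.memLp 2)).norm hcu
  calc 0 < c ^ 2 := by positivity
    _ ≤ ‖∫ x, F x * conj (v x) ∂μ‖ ^ 2 := by gcongr
    _ ≤ ∫ x, ‖F x‖ ^ 2 ∂μ := norm_integral_mul_conj_sq_le_of_unitBounded hF hv

end WeakL2

theorem MeasureTheory.MeasurePreserving.integral_comp_of_aestronglyMeasurable_s18 {X Y E : Type*}
    [MeasurableSpace X] [MeasurableSpace Y] [NormedAddCommGroup E] [NormedSpace ℝ E]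
    {μ : Measure X} {ν : Measure Y} {T : X → Y} (hT : MeasurePreserving T μ ν) {G : Y → E}
    (hG : AEStronglyMeasurable G ν) : ∫ x, G (T x) ∂μ = ∫ y, G y ∂ν := by
  rw [← hT.map_eq] at hG ⊢
  exact (integral_map hT.measurable.aemeasurable hG).symm

section MultipleAverages

variable {X : Type*} {T : ℤ → X → X} {ℓ : ℕ} {a : Fin ℓ → ℕ → ℤ} {f : Fin ℓ → X → ℂ}
  {m : Fin ℓ}

noncomputable def multAvg (T : ℤ → X → X) (a : Fin ℓ → ℕ → ℤ) (f : Fin ℓ → X → ℂ) (N : ℕ)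
    (x : X) : ℂ :=
  cesaro (fun n => ∏ j, f j (T (a j n) x)) N

noncomputable def dualAvg (T : ℤ → X → X) (a : Fin ℓ → ℕ → ℤ) (f : Fin ℓ → X → ℂ) (m : Fin ℓ)
    (g : X → ℂ) (N : ℕ) (x : X) : ℂ :=
  cesaro (fun n => g (T (-a m n) x) *
    ∏ j ∈ Finset.univ.erase m, conj (f j (T (a j n - a m n) x))) N

theorem multAvg_update (φ : X → ℂ) (N : ℕ) (x : X) :
    multAvg T a (Function.update f m φ) N x =
      cesaro (fun n => φ (T (a m n) x) * ∏ j ∈ Finset.univ.erase m, f j (T (a j n) x)) N := by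
  unfold multAvg
  congr 1
  funext n
  rw [← Finset.mul_prod_erase _ _ (Finset.mem_univ m), Function.update_self]
  congr 1
  refine Finset.prod_congr rfl fun j hj => ?_
  rw [Function.update_of_ne (Finset.ne_of_mem_erase hj)]

variable [MeasurableSpace X] {μ : Measure X}

theorem UnitBounded.multAvg (hT : ∀ n, MeasurePreserving (T n) μ μ)
    (hf : ∀ j, UnitBounded μ (f j)) (N : ℕ) : UnitBounded μ (multAvg T a f N) :=
  UnitBounded.cesaro (fun _ => UnitBounded.finset_prod _ fun j _ =>
    (hf j).comp_measurePreserving (hT _)) N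

theorem UnitBounded.dualAvg (hT : ∀ n, MeasurePreserving (T n) μ μ)
    (hf : ∀ j, UnitBounded μ (f j)) {g : X → ℂ} (hg : UnitBounded μ g) (N : ℕ) :
    UnitBounded μ (dualAvg T a f m g N) :=
  UnitBounded.cesaro (fun _ => (hg.comp_measurePreserving (hT _)).mul <|
    UnitBounded.finset_prod _ fun j _ => ((hf j).comp_measurePreserving (hT _)).conj) N

theorem integral_multAvg_update_mul_conj [IsFiniteMeasure μ]
    (hT : ∀ n, MeasurePreserving (T n) μ μ) (hT0 : T 0 = id)
    (hTadd : ∀ m n, T (m + n) = T m ∘ T n) (hf : ∀ j, UnitBounded μ (f j)) {φ g : X → ℂ}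
    (hφ : UnitBounded μ φ) (hg : UnitBounded μ g) (N : ℕ) :
    ∫ x, multAvg T a (Function.update f m φ) N x * conj (g x) ∂μ =
      ∫ x, φ x * conj (dualAvg T a f m g N x) ∂μ := by
  have hTT : ∀ b c x, T b (T c x) = T (b + c) x := fun b c x => (congrFun (hTadd b c) x).symm
  have hleft : ∀ n, UnitBounded μ fun x =>
      φ (T (a m n) x) * (∏ j ∈ Finset.univ.erase m, f j (T (a j n) x)) * conj (g x) :=
    fun n => ((hφ.comp_measurePreserving (hT _)).mul
      (UnitBounded.finset_prod _ fun j _ => (hf j).comp_measurePreserving (hT _))).mul hg.conj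
  have hright : ∀ n, UnitBounded μ fun x => φ x * conj (g (T (-a m n) x) *
      ∏ j ∈ Finset.univ.erase m, conj (f j (T (a j n - a m n) x))) :=
    fun n => hφ.mul ((hg.comp_measurePreserving (hT _)).mul
      (UnitBounded.finset_prod _ fun j _ => ((hf j).comp_measurePreserving (hT _)).conj)).conj
  simp only [multAvg_update, dualAvg, cesaro_mul, mul_conj_cesaro]
  rw [integral_cesaro fun n => (hleft n).integrable, integral_cesaro fun n => (hright n).integrable]
  congr 1
  funext n
  rw [← (hT (-a m n)).integral_comp_of_aestronglyMeasurable_s18 (hleft n).1]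
  refine integral_congr_ae (Eventually.of_forall fun y => ?_)
  simp only [map_mul, map_prod, Complex.conj_conj, hTT, add_neg_cancel, hT0, id, sub_eq_add_neg]
  ring

theorem norm_integral_dualAvg_mul_conj [IsFiniteMeasure μ]
    (hT : ∀ n, MeasurePreserving (T n) μ μ) (hT0 : T 0 = id)
    (hTadd : ∀ m n, T (m + n) = T m ∘ T n) (hf : ∀ j, UnitBounded μ (f j)) (N : ℕ) :
    ‖∫ x, dualAvg T a f m (multAvg T a f N) N x * conj (f m x) ∂μ‖ =
      ∫ x, ‖multAvg T a f N x‖ ^ 2 ∂μ := by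
  rw [← RCLike.norm_conj, ← integral_conj]
  simp only [map_mul, Complex.conj_conj, mul_comm (conj _) (f m _)]
  rw [← integral_multAvg_update_mul_conj hT hT0 hTadd hf (hf m) (UnitBounded.multAvg hT hf N),
    Function.update_eq_self, integral_mul_conj_self, Complex.norm_real,
    Real.norm_of_nonneg (integral_nonneg fun _ => by positivity)]

theorem limsup_pos_of_tendstoWeakL2_dualAvg [IsProbabilityMeasure μ]
    (hT : ∀ n, MeasurePreserving (T n) μ μ) (hT0 : T 0 = id)
    (hTadd : ∀ m n, T (m + n) = T m ∘ T n) (hf : ∀ j, UnitBounded μ (f j))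
    {g : ℕ → X → ℂ} (hg : ∀ k, UnitBounded μ (g k)) {Nk : ℕ → ℕ}
    (hNk : Tendsto Nk atTop atTop) {F : X → ℂ} (hF : UnitBounded μ F)
    (hlim : TendstoWeakL2 μ (fun k => dualAvg T a f m (g k) (Nk k)) F)
    (hF0 : 0 < ∫ x, ‖F x‖ ^ 2 ∂μ) :
    0 < limsup (fun N => ∫ x, ‖multAvg T a (Function.update f m F) N x‖ ^ 2 ∂μ) atTop := by
  set L := ∫ x, ‖F x‖ ^ 2 ∂μ
  have hB : ∀ N, UnitBounded μ (multAvg T a (Function.update f m F) N) := fun N =>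
    UnitBounded.multAvg hT (fun j => by
      rcases eq_or_ne j m with rfl | hj
      · simpa using hF
      · simpa [hj] using hf j) N
  have hCS : ∀ k, ‖∫ x, dualAvg T a f m (g k) (Nk k) x * conj (F x) ∂μ‖ ^ 2 ≤
      ∫ x, ‖multAvg T a (Function.update f m F) (Nk k) x‖ ^ 2 ∂μ := fun k => by
    rw [← RCLike.norm_conj, ← integral_conj]
    simp only [map_mul, Complex.conj_conj, mul_comm (conj _) (F _)]
    rw [← integral_multAvg_update_mul_conj hT hT0 hTadd hf hF (hg k)]
    exact norm_integral_mul_conj_sq_le_of_unitBounded ((hB _).memLp 2) (hg k)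
  have hsq : Tendsto (fun k => ‖∫ x, dualAvg T a f m (g k) (Nk k) x * conj (F x) ∂μ‖ ^ 2)
      atTop (𝓝 (L ^ 2)) := by
    have := ((hlim F (hF.memLp 2)).norm).pow 2
    rwa [integral_mul_conj_self, Complex.norm_real, Real.norm_of_nonneg hF0.le] at this
  have hlarge : ∀ᶠ k in atTop,
      L ^ 2 / 2 ≤ ∫ x, ‖multAvg T a (Function.update f m F) (Nk k) x‖ ^ 2 ∂μ :=
    (hsq.eventually (eventually_ge_nhds (half_lt_self (by positivity)))).mono
      fun k hk => hk.trans (hCS k)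
  refine (by positivity : 0 < L ^ 2 / 2).trans_le (le_limsup_of_frequently_le
    (hNk.frequently hlarge.frequently) ?_)
  exact isBoundedUnder_of ⟨1, fun N => (hB N).integral_norm_sq_le_one⟩

end MultipleAverages

/-- **Passing to characteristic factors (Proposition on dual functions).** If
`limsup_N ‖𝔼_{n ∈ [N]} ∏_j T^{a_j(n)} f_j‖_{L²(μ)} > 0` with all `f_j` bounded by 1, then for
every `m` there exist `N_k → ∞` and `g_k` bounded by 1 such that the weak limit
`f̃_m = lim_k 𝔼_{n ∈ [N_k]} T^{−a_m(n)} g_k ⋅ ∏_{j ≠ m} T^{a_j(n) − a_m(n)} conj(f_j)` exists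
in `L²(μ)`, lies in `L^∞(μ)`, and
`limsup_N ‖𝔼_{n ∈ [N]} T^{a_m(n)} f̃_m ⋅ ∏_{j ≠ m} T^{a_j(n)} f_j‖_{L²(μ)} > 0`. -/
theorem stmt18 {X : Type*} [MeasurableSpace X] (μ : Measure X) [IsProbabilityMeasure μ]
    (T : ℤ → X → X) (hT : ∀ n, MeasurePreserving (T n) μ μ)
    (hT0 : T 0 = id) (hTadd : ∀ m n, T (m + n) = T m ∘ T n)
    (ℓ : ℕ) (a : Fin ℓ → ℕ → ℤ)
    (f : Fin ℓ → X → ℂ) (hfL : ∀ j, MemLp (f j) ⊤ μ)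
    (hf1 : ∀ j, ∀ᵐ x ∂μ, ‖f j x‖ ≤ 1)
    (hbig : 0 < Filter.limsup (fun N : ℕ =>
      ∫ x, ‖(N : ℂ)⁻¹ * ∑ n ∈ Finset.Icc 1 N, ∏ j, f j (T (a j n) x)‖ ^ 2 ∂μ) Filter.atTop)
    (m : Fin ℓ) :
    ∃ (Nk : ℕ → ℕ) (g : ℕ → X → ℂ) (ft : X → ℂ),
      Tendsto Nk atTop atTop ∧
      (∀ k, MemLp (g k) ⊤ μ ∧ ∀ᵐ x ∂μ, ‖g k x‖ ≤ 1) ∧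
      MemLp ft ⊤ μ ∧
      (∀ h : X → ℂ, MemLp h 2 μ →
        Tendsto (fun k : ℕ => ∫ x, ((Nk k : ℂ)⁻¹ * ∑ n ∈ Finset.Icc 1 (Nk k),
            g k (T (-(a m n)) x) *
              ∏ j ∈ Finset.univ.erase m, (starRingEnd ℂ) (f j (T (a j n - a m n) x))) *
          (starRingEnd ℂ) (h x) ∂μ) atTop
          (nhds (∫ x, ft x * (starRingEnd ℂ) (h x) ∂μ))) ∧
      0 < Filter.limsup (fun N : ℕ =>
        ∫ x, ‖(N : ℂ)⁻¹ * ∑ n ∈ Finset.Icc 1 N,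
          ft (T (a m n) x) * ∏ j ∈ Finset.univ.erase m, f j (T (a j n) x)‖ ^ 2 ∂μ)
        Filter.atTop := by
  have hf : ∀ j, UnitBounded μ (f j) := fun j => ⟨(hfL j).1, hf1 j⟩
  change 0 < limsup (fun N => ∫ x, ‖multAvg T a f N x‖ ^ 2 ∂μ) atTop at hbig
  obtain ⟨Nk, hNk, hNkc⟩ := extraction_of_frequently_atTop <| frequently_lt_of_lt_limsup
    (isBoundedUnder_of ⟨0, fun N => integral_nonneg fun x => by positivity⟩).isCoboundedUnder_le
    (half_lt_self hbig)
  set g : ℕ → X → ℂ := fun k => multAvg T a f (Nk k)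
  have hg : ∀ k, UnitBounded μ (g k) := fun k => UnitBounded.multAvg hT hf _
  have hD : ∀ k, UnitBounded μ (dualAvg T a f m (g k) (Nk k)) := fun k =>
    UnitBounded.dualAvg hT hf (hg k) _
  obtain ⟨ψ, F, hψ, hF2, hlim⟩ := exists_strictMono_tendstoWeakL2 (fun k => (hD k).memLp 2)
    fun k => (hD k).integral_norm_sq_le_one
  have hF : UnitBounded μ F := hlim.unitBounded (fun k => hD (ψ k)) hF2
  have hNψ : Tendsto (fun k => Nk (ψ k)) atTop atTop :=
    hNk.tendsto_atTop.comp hψ.tendsto_atTop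
  have hF0 : 0 < ∫ x, ‖F x‖ ^ 2 ∂μ := hlim.integral_norm_sq_pos hF2 (hf m) (half_pos hbig)
    fun k => (hNkc (ψ k)).le.trans_eq (norm_integral_dualAvg_mul_conj hT hT0 hTadd hf _).symm
  refine ⟨fun k => Nk (ψ k), fun k => g (ψ k), F, hNψ, fun k => ⟨(hg _).memLp ⊤, (hg _).2⟩,
    hF.memLp ⊤, hlim, ?_⟩
  have hpos := limsup_pos_of_tendstoWeakL2_dualAvg hT hT0 hTadd hf (fun k => hg (ψ k)) hNψ hF
    hlim hF0
  simp only [multAvg_update] at hpos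
  exact hpos
end
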